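/- arXiv:2107.12906 — 7 statements merged into one kernel-verified Lean document; each statement's English description precedes it below -/
import Mathlib

section
/- If f : [0,1] → ℝ is a non-decreasing function (a profile), then its update Uf is also non-decreasing. Consequently, for every t ∈ ℕ the t-fold update Uᵗf is a well-defined profile. -/
/-!
For `α ≤ α'` write `A = N_α(f)`, `B = N_α'(f)`, `p = f α' - 1` and `q = f α + 1`. Since `f` is
non-decreasing, `f ≤ p` on `A \ B`, `p ≤ f` on `B`, `f ≤ q` on `A` and `q ≤ f` on `B \ A`: the
agents that only `α` sees lie below all agents of `B`, and those only `α'` sees lie above all of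
`A`. Splitting both integrals and masses along `A ∩ B` and cross-multiplying, the `A ∩ B` terms
cancel and every other cross term compares a piece of `A` with a piece of `B` lying above it.
-/

open MeasureTheory Set

/-- The neighbourhood `N_α(f)` of an agent `α ∈ [0,1]`:
all agents `β ∈ [0,1]` whose opinion is within distance 1 of that of `α`. -/
def nbhdHK (f : ℝ → ℝ) (α : ℝ) : Set ℝ :=
  {β | β ∈ Icc (0:ℝ) 1 ∧ |f β - f α| ≤ 1}

/-- The Hegselmann–Krause updating operator `U`:
`Uf(α)` is the average of `f` over `N_α(f)` if that set has positive Lebesgue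
measure, and `f(α)` otherwise. -/
noncomputable def updateHK (f : ℝ → ℝ) (α : ℝ) : ℝ :=
  if 0 < (volume (nbhdHK f α)).toReal then
    (∫ β in nbhdHK f α, f β) / (volume (nbhdHK f α)).toReal
  else f α

section Average

variable {X : Type*} [MeasurableSpace X] {μ : Measure X} {f : X → ℝ} {s : Set X} {c : ℝ}

/-- `μ.real s = 0` also when `μ s = ∞`; such sets get the default `d` as well. -/
noncomputable def setAverageOr (μ : Measure X) (f : X → ℝ) (s : Set X) (d : ℝ) : ℝ :=
  if 0 < μ.real s then (∫ x in s, f x ∂μ) / μ.real s else d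

theorem setIntegral_le_of_le_const_real (hs : MeasurableSet s) (hμs : μ s ≠ ⊤)
    (hf : ∀ x ∈ s, f x ≤ c) (hfint : IntegrableOn f s μ) :
    ∫ x in s, f x ∂μ ≤ c * μ.real s := by
  have := setIntegral_mono_on hfint (integrableOn_const hμs) hs hf
  rwa [setIntegral_const, smul_eq_mul, mul_comm] at this

/-- `a, b, c` are the masses of `A \ B`, `B \ A`, `A ∩ B`, and `I, I', J` the integrals of `f`
over these pieces. -/
theorem ite_div_le_ite_div {a b c I I' J p q d d' : ℝ} (ha : 0 ≤ a) (hb : 0 ≤ b) (hc : 0 ≤ c)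
    (hI : I ≤ p * a) (hJp : p * c ≤ J) (hJq : J ≤ q * c) (hI'p : p * b ≤ I') (hI'q : q * b ≤ I')
    (hdd' : d ≤ d') (hpd' : p ≤ d') (hdq : d ≤ q) :
    (if 0 < c + a then (J + I) / (c + a) else d) ≤
      (if 0 < c + b then (J + I') / (c + b) else d') := by
  split_ifs with hA hB hB
  · rw [div_le_div_iff₀ hA hB]
    nlinarith [mul_le_mul_of_nonneg_right hI hb, mul_le_mul_of_nonneg_right hI hc,
      mul_le_mul_of_nonneg_right hJq hb, mul_le_mul_of_nonneg_right hJp ha,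
      mul_le_mul_of_nonneg_right hI'p ha, mul_le_mul_of_nonneg_right hI'q hc]
  · obtain rfl : c = 0 := by linarith
    rw [div_le_iff₀ hA]
    nlinarith
  · obtain rfl : c = 0 := by linarith
    rw [le_div_iff₀ hB]
    nlinarith
  · exact hdd'

theorem setAverageOr_le_setAverageOr {A B : Set X} {p q d d' : ℝ} (hA : MeasurableSet A)
    (hB : MeasurableSet B) (hμA : μ A ≠ ⊤) (hμB : μ B ≠ ⊤) (hfA : IntegrableOn f A μ)
    (hfB : IntegrableOn f B μ) (hAB : ∀ x ∈ A \ B, f x ≤ p) (hpB : ∀ x ∈ B, p ≤ f x)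
    (hAq : ∀ x ∈ A, f x ≤ q) (hBA : ∀ x ∈ B \ A, q ≤ f x)
    (hdd' : d ≤ d') (hpd' : p ≤ d') (hdq : d ≤ q) :
    setAverageOr μ f A d ≤ setAverageOr μ f B d' := by
  have hμAB : μ (A ∩ B) ≠ ⊤ := measure_ne_top_of_subset inter_subset_left hμA
  have hμAB' : μ (A \ B) ≠ ⊤ := measure_ne_top_of_subset sdiff_subset hμA
  have hμBA : μ (B \ A) ≠ ⊤ := measure_ne_top_of_subset sdiff_subset hμB
  unfold setAverageOr
  rw [← measureReal_inter_add_sdiff hB hμA, ← measureReal_inter_add_sdiff hA hμB,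
    ← integral_inter_add_sdiff hB hfA, ← integral_inter_add_sdiff hA hfB, inter_comm B A]
  exact ite_div_le_ite_div measureReal_nonneg measureReal_nonneg measureReal_nonneg
    (setIntegral_le_of_le_const_real (hA.diff hB) hμAB' hAB (hfA.mono_set sdiff_subset))
    (setIntegral_ge_of_const_le_real (hA.inter hB) hμAB (fun x hx => hpB x hx.2)
      (hfA.mono_set inter_subset_left))
    (setIntegral_le_of_le_const_real (hA.inter hB) hμAB (fun x hx => hAq x hx.1)
      (hfA.mono_set inter_subset_left))
    (setIntegral_ge_of_const_le_real (hB.diff hA) hμBA (fun x hx => hpB x hx.1)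
      (hfB.mono_set sdiff_subset))
    (setIntegral_ge_of_const_le_real (hB.diff hA) hμBA hBA (hfB.mono_set sdiff_subset))
    hdd' hpd' hdq

end Average

section Neighbourhood

variable {f : ℝ → ℝ} {α α' x : ℝ}

theorem updateHK_eq_setAverageOr (f : ℝ → ℝ) (α : ℝ) :
    updateHK f α = setAverageOr volume f (nbhdHK f α) (f α) := rfl

theorem nbhdHK_subset_Icc (f : ℝ → ℝ) (α : ℝ) : nbhdHK f α ⊆ Icc 0 1 := fun _ h => h.1

theorem le_add_one_of_mem_nbhdHK (hx : x ∈ nbhdHK f α) : f x ≤ f α + 1 := by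
  linarith [(abs_le.1 hx.2).2]

theorem sub_one_le_of_mem_nbhdHK (hx : x ∈ nbhdHK f α) : f α - 1 ≤ f x := by
  linarith [(abs_le.1 hx.2).1]

theorem le_sub_one_of_mem_nbhdHK_sdiff (h : f α ≤ f α') (hx : x ∈ nbhdHK f α \ nbhdHK f α') :
    f x ≤ f α' - 1 := by
  by_contra! hlt
  exact hx.2 ⟨hx.1.1, abs_le.2 ⟨by linarith, by linarith [le_add_one_of_mem_nbhdHK hx.1]⟩⟩

theorem add_one_le_of_mem_nbhdHK_sdiff (h : f α ≤ f α') (hx : x ∈ nbhdHK f α' \ nbhdHK f α) :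
    f α + 1 ≤ f x := by
  by_contra! hlt
  exact hx.2 ⟨hx.1.1, abs_le.2 ⟨by linarith [sub_one_le_of_mem_nbhdHK hx.1], by linarith⟩⟩

theorem MonotoneOn.ordConnected_nbhdHK (hf : MonotoneOn f (Icc 0 1)) (α : ℝ) :
    (nbhdHK f α).OrdConnected := by
  refine ⟨fun x hx y hy z hz => ?_⟩
  have hzI : z ∈ Icc (0 : ℝ) 1 := ⟨hx.1.1.trans hz.1, hz.2.trans hy.1.2⟩
  refine ⟨hzI, abs_le.2 ⟨?_, ?_⟩⟩
  · linarith [sub_one_le_of_mem_nbhdHK hx, hf hx.1 hzI hz.1]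
  · linarith [le_add_one_of_mem_nbhdHK hy, hf hzI hy.1 hz.2]

end Neighbourhood

theorem MonotoneOn.updateHK {f : ℝ → ℝ} (hf : MonotoneOn f (Icc 0 1)) :
    MonotoneOn (updateHK f) (Icc 0 1) := by
  intro α hα α' hα' hle
  have hfα : f α ≤ f α' := hf hα hα' hle
  have hint : IntegrableOn f (Icc 0 1) := hf.integrableOn_isCompact isCompact_Icc
  rw [updateHK_eq_setAverageOr, updateHK_eq_setAverageOr]
  exact setAverageOr_le_setAverageOr (hf.ordConnected_nbhdHK α).measurableSet
    (hf.ordConnected_nbhdHK α').measurableSet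
    (measure_ne_top_of_subset (nbhdHK_subset_Icc f α) measure_Icc_lt_top.ne)
    (measure_ne_top_of_subset (nbhdHK_subset_Icc f α') measure_Icc_lt_top.ne)
    (hint.mono_set (nbhdHK_subset_Icc f α)) (hint.mono_set (nbhdHK_subset_Icc f α'))
    (fun _ => le_sub_one_of_mem_nbhdHK_sdiff hfα) (fun _ => sub_one_le_of_mem_nbhdHK)
    (fun _ => le_add_one_of_mem_nbhdHK) (fun _ => add_one_le_of_mem_nbhdHK_sdiff hfα)
    hfα (by linarith) (by linarith)

/-- if `f : [0,1] → ℝ` is non-decreasing (a profile), then so is `Uf`;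
consequently every iterate `Uᵗf` is a well-defined profile. -/
theorem stmt0 (f : ℝ → ℝ) (hf : MonotoneOn f (Icc 0 1)) :
    MonotoneOn (updateHK f) (Icc 0 1) ∧
      ∀ t : ℕ, MonotoneOn (updateHK^[t] f) (Icc 0 1) :=
  ⟨hf.updateHK, fun t => Function.Iterate.rec _ hf (fun _ hg => hg.updateHK) t⟩
end

section
/- The update operator commutes with measure-preserving rearrangements: if g : [0,1] → ℝ is a bounded measurable function, σ : [0,1] → [0,1] is a measure-preserving bijection (with respect to Lebesgue measure), and h = g ∘ σ, then Uh = (Ug) ∘ σ. In particular, if g ∼ h (g and h are permutation equivalent) then Ug ∼ Uh. -/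
open MeasureTheory Set

/-- the update operator commutes with measure-preserving
rearrangements: if `g` is bounded measurable, `σ` is a Lebesgue-measure-preserving
bijection of `[0,1]`, and `h = g ∘ σ`, then `Uh = (Ug) ∘ σ`; in particular
`g ∼ h` implies `Ug ∼ Uh` (witnessed by some measure-preserving bijection `τ`). -/
theorem stmt2 (g : ℝ → ℝ) (hmeas : Measurable g)
    (hbdd : ∃ C : ℝ, ∀ α ∈ Icc (0:ℝ) 1, |g α| ≤ C)
    (σ : ℝ → ℝ) (hbij : BijOn σ (Icc (0:ℝ) 1) (Icc (0:ℝ) 1))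
    (hmp : MeasurePreserving σ (volume.restrict (Icc (0:ℝ) 1))
      (volume.restrict (Icc (0:ℝ) 1)))
    (h : ℝ → ℝ) (hh : ∀ α ∈ Icc (0:ℝ) 1, h α = g (σ α)) :
    (∀ α ∈ Icc (0:ℝ) 1, updateHK h α = updateHK g (σ α)) ∧
      ∃ τ : ℝ → ℝ, BijOn τ (Icc (0:ℝ) 1) (Icc (0:ℝ) 1) ∧
        MeasurePreserving τ (volume.restrict (Icc (0:ℝ) 1))
          (volume.restrict (Icc (0:ℝ) 1)) ∧
        ∀ α ∈ Icc (0:ℝ) 1, updateHK h α = updateHK g (τ α) := by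
  have key : ∀ α ∈ Icc (0:ℝ) 1, updateHK h α = updateHK g (σ α) := by
    intro α hα
    set B := nbhdHK g (σ α) with hBdef
    have hBmeas : MeasurableSet B := by
      have : B = Icc (0:ℝ) 1 ∩ (fun β => |g β - g (σ α)|) ⁻¹' Iic 1 := by
        ext β
        simp [hBdef, nbhdHK]
      rw [this]
      exact measurableSet_Icc.inter
        (((hmeas.sub measurable_const).abs) measurableSet_Iic)
    have hBsub : B ⊆ Icc (0:ℝ) 1 := fun β hβ => hβ.1
    have hAeq : nbhdHK h α = Icc (0:ℝ) 1 ∩ σ ⁻¹' B := by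
      ext β
      constructor
      · rintro ⟨hβ, hle⟩
        refine ⟨hβ, hbij.mapsTo hβ, ?_⟩
        rwa [hh β hβ, hh α hα] at hle
      · rintro ⟨hβ, _, hle⟩
        exact ⟨hβ, by rwa [hh β hβ, hh α hα]⟩
    -- equality of measures
    have hvol : volume (nbhdHK h α) = volume B := by
      rw [hAeq, inter_comm, ← Measure.restrict_apply (hmp.measurable hBmeas),
        hmp.measure_preimage hBmeas.nullMeasurableSet,
        Measure.restrict_apply hBmeas, inter_eq_left.mpr hBsub]
    -- equality of integrals
    have hint : (∫ β in nbhdHK h α, h β) = ∫ β in B, g β := by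
      have h1 : (∫ β in nbhdHK h α, h β) = ∫ β in nbhdHK h α, g (σ β) := by
        rw [hAeq]
        exact setIntegral_congr_fun
          (measurableSet_Icc.inter (hmp.measurable hBmeas))
          (fun β hβ => hh β hβ.1)
      have h2 : (∫ β in nbhdHK h α, g (σ β))
          = ∫ β in σ ⁻¹' B, g (σ β) ∂(volume.restrict (Icc (0:ℝ) 1)) := by
        rw [Measure.restrict_restrict (hmp.measurable hBmeas), hAeq, inter_comm]
      have h3 : (∫ β in σ ⁻¹' B, g (σ β) ∂(volume.restrict (Icc (0:ℝ) 1)))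
          = ∫ β in B, g β ∂(volume.restrict (Icc (0:ℝ) 1)) := by
        rw [← setIntegral_map hBmeas
          (by rw [hmp.map_eq]; exact hmeas.aestronglyMeasurable)
          hmp.measurable.aemeasurable, hmp.map_eq]
      have h4 : (∫ β in B, g β ∂(volume.restrict (Icc (0:ℝ) 1)))
          = ∫ β in B, g β := by
        rw [Measure.restrict_restrict hBmeas, inter_eq_self_of_subset_left hBsub]
      rw [h1, h2, h3, h4]
    unfold updateHK
    rw [hvol, hint, hh α hα]
  exact ⟨key, σ, hbij, hmp, key⟩
end

section
/- Symmetry is preserved by the update: if a profile f : [0,1] → ℝ is symmetric about c ∈ ℝ, i.e. f(α) + f(1 − α) = c for Lebesgue-almost every α ∈ [0,1], then Uf is also symmetric about c, i.e. Uf(α) + Uf(1 − α) = c for almost every α ∈ [0,1]. -/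
/-! The reflection `x ↦ 1 - x` preserves Lebesgue measure and, off a null set, turns `f` into
`c - f`. For an agent `α` at which the symmetry holds it therefore maps `N_α(f)` onto
`N_{1-α}(f)` up to a null set, so both neighbourhoods have the same measure `m`, and the integral
of `f` over `N_{1-α}(f)` is `c m` minus that over `N_α(f)`. The two averages then add up to `c`. -/

open MeasureTheory Set

section Symmetric

variable {f : ℝ → ℝ} {c α : ℝ}
  (hsym : ∀ᵐ x ∂(volume.restrict (Icc (0:ℝ) 1)), f x + f (1 - x) = c)
  (hα : f α + f (1 - α) = c)

include hsym hα

lemma nbhdHK_one_sub_ae_eq_preimage :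
    nbhdHK f (1 - α) =ᵐ[volume] (fun x => 1 - x) ⁻¹' nbhdHK f α := by
  rw [ae_restrict_iff' measurableSet_Icc] at hsym
  refine Filter.eventuallyEq_set.2 (hsym.mono fun x hx => ?_)
  have hmem : 1 - x ∈ Icc (0:ℝ) 1 ↔ x ∈ Icc 0 1 := by
    simp only [mem_Icc, sub_nonneg, sub_le_self_iff, and_comm]
  simp only [nbhdHK, mem_preimage, mem_ofPred, hmem]
  refine and_congr_right fun hxI => ?_
  rw [← abs_neg (f (1 - x) - f α), show -(f (1 - x) - f α) = f x - f (1 - α) by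
    linarith [hx hxI]]

lemma volume_nbhdHK_one_sub : volume (nbhdHK f (1 - α)) = volume (nbhdHK f α) := by
  rw [measure_congr (nbhdHK_one_sub_ae_eq_preimage hsym hα),
    (Measure.measurePreserving_sub_left volume 1).measure_preimage_emb
      (MeasurableEquiv.subLeft (1:ℝ)).measurableEmbedding]

omit hα in
lemma setIntegral_one_sub_nbhdHK (hint : IntegrableOn f (Icc 0 1)) :
    ∫ x in nbhdHK f α, f (1 - x) = c * volume.real (nbhdHK f α) - ∫ x in nbhdHK f α, f x := by
  have hsub : nbhdHK f α ⊆ Icc 0 1 := fun _ h => h.1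
  have hfin : volume (nbhdHK f α) ≠ ⊤ :=
    ne_top_of_le_ne_top measure_Icc_lt_top.ne (measure_mono hsub)
  rw [integral_congr_ae (g := fun x => c - f x), integral_sub (integrableOn_const (C := c) hfin)
    (hint.mono_set hsub), setIntegral_const, smul_eq_mul, mul_comm]
  filter_upwards [ae_restrict_of_ae_restrict_of_subset hsub hsym] with x hx
  linarith

lemma setIntegral_nbhdHK_one_sub (hint : IntegrableOn f (Icc 0 1)) :
    ∫ x in nbhdHK f (1 - α), f x = c * volume.real (nbhdHK f α) - ∫ x in nbhdHK f α, f x := by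
  rw [setIntegral_congr_set (nbhdHK_one_sub_ae_eq_preimage hsym hα),
    ← setIntegral_one_sub_nbhdHK hsym hint]
  simpa using (Measure.measurePreserving_sub_left volume 1).setIntegral_preimage_emb
    (MeasurableEquiv.subLeft (1:ℝ)).measurableEmbedding (fun y => f (1 - y)) (nbhdHK f α)

lemma updateHK_add_updateHK_one_sub (hint : IntegrableOn f (Icc 0 1)) :
    updateHK f α + updateHK f (1 - α) = c := by
  have hvol := volume_nbhdHK_one_sub hsym hα
  have hintegral := setIntegral_nbhdHK_one_sub hsym hα hint
  rw [measureReal_def] at hintegral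
  unfold updateHK
  rw [hvol, hintegral]
  split_ifs with hpos
  · field_simp
    ring
  · exact hα

end Symmetric

/-- symmetry is preserved by the update: if a profile `f` satisfies
`f(α) + f(1-α) = c` for a.e. `α ∈ [0,1]`, then so does `Uf`. -/
theorem stmt3 (f : ℝ → ℝ) (hf : MonotoneOn f (Icc 0 1)) (c : ℝ)
    (hsym : ∀ᵐ α ∂(volume.restrict (Icc (0:ℝ) 1)), f α + f (1 - α) = c) :
    ∀ᵐ α ∂(volume.restrict (Icc (0:ℝ) 1)),
      updateHK f α + updateHK f (1 - α) = c := by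
  filter_upwards [hsym] with α hα
  exact updateHK_add_updateHK_one_sub hsym hα (hf.integrableOn_isCompact isCompact_Icc)
end

section
/- Every discrete profile freezes in finite time: if f is a discrete profile on n agents, then there exists T ∈ ℕ such that U^{T+t} f = U^T f for every t ∈ ℕ. -/
open MeasureTheory Set

/-- A discrete profile on `n` agents: a profile that is constant on `[0, 1/n]`
and constant on each interval `((i-1)/n, i/n]` for integers `2 ≤ i ≤ n`. -/
def IsDiscreteProfileHK (n : ℕ) (f : ℝ → ℝ) : Prop :=
  MonotoneOn f (Icc 0 1) ∧
  (∀ α ∈ Icc (0:ℝ) (1 / n), f α = f 0) ∧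
  ∀ i : ℕ, 2 ≤ i → i ≤ n →
    ∀ α ∈ Ioc ((i - 1 : ℝ) / n) ((i : ℝ) / n), f α = f ((i : ℝ) / n)

/-!
A discrete profile is the step function of a non-decreasing vector of `n` opinions, and `U` acts
on it as the finite Hegselmann–Krause map, which moves every agent to the mean opinion of the agents
within distance `1`. This map preserves the order, keeps equal neighbours equal and keeps
neighbours more than `1` apart more than `1` apart, so the set of *settled* consecutive pairs only
grows and eventually stabilises. If a consecutive pair `(p, p + 1)` then stays unsettled forever,
with `p` lowest, no agent lies less than one unit below `p`. Hence `p` is pulled towards `p + 1`,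
and since the two never merge, `p + 1` sees an agent more than one unit above `p`; together these
make opinion `p` grow by at least `1 / n ^ 2` every two steps, contradicting boundedness.
-/

namespace HegselmannKrause

open scoped BigOperators
open Function (IsFixedPt)

lemma exists_forall_ge_eq_of_monotone {α : Type*} [DecidableEq α] {S : ℕ → Finset α}
    (hS : Monotone S) {B : Finset α} (hB : ∀ t, S t ⊆ B) : ∃ t₀, ∀ t ≥ t₀, S t = S t₀ := by
  have : Finite (Iic B) := (finite_Iic B).to_subtype
  obtain ⟨t₀, ht₀⟩ := wellFoundedGT_iff_monotone_chain_condition.1 Finite.to_wellFoundedGT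
    ⟨fun t => (⟨S t, hB t⟩ : Iic B), fun _ _ h => hS h⟩
  exact ⟨t₀, fun t ht => (congrArg Subtype.val (ht₀ t ht)).symm⟩

/-- Two steps of the recursion give `x (t + 2) ≥ x t + 1 / N ^ 2`. -/
lemma not_bddAbove_range_of_le_add_div {x y : ℕ → ℝ} {N : ℝ} (hN : 1 ≤ N)
    (hxy : ∀ t, x t ≤ y t) (hx : ∀ t, x t + (y t - x t) / N ≤ x (t + 1))
    (hy : ∀ t, x t + 1 / N ≤ y (t + 1)) : ¬ BddAbove (range x) := by
  have hN0 : 0 < N := by linarith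
  have hmono : ∀ t, x t ≤ x (t + 1) := fun t =>
    (le_add_of_nonneg_right (div_nonneg (sub_nonneg.2 (hxy t)) hN0.le)).trans (hx t)
  have htwo : ∀ t, x t + 1 / N ^ 2 ≤ x (t + 2) := fun t =>
    calc x t + 1 / N ^ 2
        ≤ x t + 1 / N ^ 2 + (1 - 1 / N) * (x (t + 1) - x t) :=
          le_add_of_nonneg_right <| mul_nonneg (by rw [sub_nonneg, div_le_one hN0]; exact hN)
            (sub_nonneg.2 (hmono t))
      _ = x (t + 1) + (x t + 1 / N - x (t + 1)) / N := by field_simp; ring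
      _ ≤ x (t + 1) + (y (t + 1) - x (t + 1)) / N := by gcongr; exact hy t
      _ ≤ x (t + 2) := hx (t + 1)
  have hlin : ∀ k : ℕ, x 0 + k / N ^ 2 ≤ x (2 * k) := by
    intro k
    induction k with
    | zero => simp
    | succ k ih =>
      rw [show 2 * (k + 1) = 2 * k + 2 by ring]
      push_cast
      linarith [htwo (2 * k), add_div (k : ℝ) 1 (N ^ 2)]
  rintro ⟨M, hM⟩
  obtain ⟨k, hk⟩ := exists_nat_gt ((M - x 0) * N ^ 2)
  have := (hlin k).trans (hM ⟨2 * k, rfl⟩)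
  rw [← lt_div_iff₀ (by positivity)] at hk
  linarith

section Mean

variable {ι : Type*} (f : ι → ℝ) {s t : Finset ι}

lemma add_div_le_expect {b r : ℝ} {N : ℕ} (hr : 0 ≤ r) (hN : s.card ≤ N)
    (hb : ∀ i ∈ s, b ≤ f i) {x : ι} (hx : x ∈ s) (hxr : b + r ≤ f x) :
    b + r / N ≤ 𝔼 i ∈ s, f i := by
  have hcard : (0 : ℝ) < s.card := by exact_mod_cast Finset.card_pos.2 ⟨x, hx⟩
  have hsum : f x - b ≤ ∑ i ∈ s, (f i - b) :=
    Finset.single_le_sum (fun i hi => sub_nonneg.2 (hb i hi)) hx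
  have hmean : 𝔼 i ∈ s, (f i - b) = 𝔼 i ∈ s, f i - b := by
    rw [Finset.expect_sub_distrib, Finset.expect_const ⟨x, hx⟩]
  calc b + r / N ≤ b + r / s.card := by gcongr
    _ ≤ b + (f x - b) / s.card := by gcongr; linarith
    _ ≤ b + 𝔼 i ∈ s, (f i - b) := by
      rw [Finset.expect_eq_sum_div_card]; gcongr
    _ = 𝔼 i ∈ s, f i := by rw [hmean]; ring

variable [DecidableEq ι]

lemma expect_union_le_expect_right (hd : Disjoint s t) (ht : t.Nonempty)
    (h : ∀ x ∈ s, ∀ y ∈ t, f x ≤ f y) : 𝔼 i ∈ s ∪ t, f i ≤ 𝔼 i ∈ t, f i := by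
  have hs : ∑ i ∈ s, f i ≤ s.card * 𝔼 i ∈ t, f i := by
    simpa using Finset.sum_le_card_nsmul s f _ fun x hx => Finset.le_expect ht (h x hx)
  have hst : (0 : ℝ) < (s ∪ t).card := by
    exact_mod_cast (ht.mono Finset.subset_union_right).card_pos
  rw [Finset.expect_eq_sum_div_card, div_le_iff₀ hst, Finset.sum_union hd,
    Finset.card_union_of_disjoint hd, ← Finset.card_mul_expect t f]
  push_cast
  linarith

lemma expect_le_expect_union_left (hd : Disjoint s t) (hs : s.Nonempty)
    (h : ∀ x ∈ s, ∀ y ∈ t, f x ≤ f y) : 𝔼 i ∈ s, f i ≤ 𝔼 i ∈ s ∪ t, f i := by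
  have := expect_union_le_expect_right (fun i => -f i) hd.symm hs
    fun x hx y hy => neg_le_neg (h y hy x hx)
  rw [Finset.expect_neg_distrib, Finset.expect_neg_distrib, Finset.union_comm] at this
  exact neg_le_neg_iff.1 this

lemma expect_le_expect_of_forall_sdiff (hs : s.Nonempty) (ht : t.Nonempty)
    (hst : ∀ x ∈ s \ t, ∀ y ∈ t, f x ≤ f y) (hts : ∀ x ∈ s, ∀ y ∈ t \ s, f x ≤ f y) :
    𝔼 i ∈ s, f i ≤ 𝔼 i ∈ t, f i := by
  rcases (s ∩ t).eq_empty_or_nonempty with hempty | hinter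
  · have hsdiff : s \ t = s :=
      Finset.sdiff_eq_self_of_disjoint (Finset.disjoint_iff_inter_eq_empty.2 hempty)
    exact Finset.expect_le hs fun x hx =>
      Finset.le_expect ht fun y hy => hst x (by rwa [hsdiff]) y hy
  calc 𝔼 i ∈ s, f i = 𝔼 i ∈ s \ t ∪ s ∩ t, f i := by rw [Finset.sdiff_union_inter]
    _ ≤ 𝔼 i ∈ s ∩ t, f i :=
      expect_union_le_expect_right f (Finset.disjoint_sdiff_inter s t) hinter
        fun x hx y hy => hst x hx y (Finset.mem_inter.1 hy).2
    _ ≤ 𝔼 i ∈ s ∩ t ∪ t \ s, f i :=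
      expect_le_expect_union_left f (Finset.disjoint_sdiff.mono_left Finset.inter_subset_left)
        hinter fun x hx y hy => hts x (Finset.mem_inter.1 hx).1 y hy
    _ = 𝔼 i ∈ t, f i := by
      congr 1; ext x; simp only [Finset.mem_union, Finset.mem_inter, Finset.mem_sdiff]; tauto

end Mean

section Agents

variable {n : ℕ} {v : ℕ → ℝ} {i j p q : ℕ}

noncomputable def window (n : ℕ) (v : ℕ → ℝ) (i : ℕ) : Finset ℕ :=
  (Finset.range n).filter fun j => |v j - v i| ≤ 1

/-- Agents are the indices `i < n`; the others are left untouched, so that a frozen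
configuration is a genuine fixed point. -/
noncomputable def step (n : ℕ) (v : ℕ → ℝ) (i : ℕ) : ℝ :=
  if i < n then 𝔼 j ∈ window n v i, v j else v i

lemma mem_window : j ∈ window n v i ↔ j < n ∧ |v j - v i| ≤ 1 := by
  simp [window]

lemma self_mem_window (hi : i < n) : i ∈ window n v i := by
  simp [mem_window, hi]

lemma card_window_le : (window n v i).card ≤ n :=
  (Finset.card_filter_le _ _).trans (Finset.card_range n).le

lemma step_of_lt (hi : i < n) : step n v i = 𝔼 j ∈ window n v i, v j := if_pos hi

lemma step_eq_step (hi : i < n) (hj : j < n) (h : v i = v j) : step n v i = step n v j := by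
  rw [step_of_lt hi, step_of_lt hj, window, window, h]

lemma step_le_step (hi : i < n) (hj : j < n) (hij : v i ≤ v j) : step n v i ≤ step n v j := by
  rw [step_of_lt hi, step_of_lt hj]
  refine expect_le_expect_of_forall_sdiff v ⟨i, self_mem_window hi⟩ ⟨j, self_mem_window hj⟩
    (fun x hx y hy => ?_) (fun x hx y hy => ?_)
  · obtain ⟨hxi, hxj⟩ := Finset.mem_sdiff.1 hx
    rw [mem_window, abs_le] at hxi hxj hy
    obtain ⟨hxn, hxi⟩ := hxi
    have : v x < v j - 1 := by
      by_contra!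
      exact hxj ⟨hxn, by linarith, by linarith⟩
    linarith
  · obtain ⟨hyj, hyi⟩ := Finset.mem_sdiff.1 hy
    rw [mem_window, abs_le] at hx hyi hyj
    obtain ⟨hyn, hyj⟩ := hyj
    have : v i + 1 < v y := by
      by_contra!
      exact hyi ⟨hyn, by linarith, by linarith⟩
    linarith

lemma monotoneOn_step (hv : MonotoneOn v (Iio n)) : MonotoneOn (step n v) (Iio n) :=
  fun _ hi _ hj hij => step_le_step hi hj (hv hi hj hij)

lemma step_le_of_forall_le {M : ℝ} (h : ∀ j < n, v j ≤ M) (hi : i < n) : step n v i ≤ M := by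
  rw [step_of_lt hi]
  exact Finset.expect_le ⟨i, self_mem_window hi⟩ fun j hj => h j (mem_window.1 hj).1

def IsIsolatedBelow (n : ℕ) (v : ℕ → ℝ) (p : ℕ) : Prop :=
  ∀ j < n, v p - 1 ≤ v j → v p ≤ v j

namespace IsIsolatedBelow

lemma le_of_mem_window (hp : IsIsolatedBelow n v p) (hj : j ∈ window n v p) : v p ≤ v j := by
  rw [mem_window, abs_le] at hj
  exact hp j hj.1 (by linarith)

lemma le_step (hp : IsIsolatedBelow n v p) (hpn : p < n) : v p ≤ step n v p := by
  rw [step_of_lt hpn]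
  exact Finset.le_expect ⟨p, self_mem_window hpn⟩ fun j hj => hp.le_of_mem_window hj

lemma add_div_le_step (hp : IsIsolatedBelow n v p) (hpn : p < n) (hqn : q < n)
    (hpq : v p ≤ v q) (hq : v q - v p ≤ 1) : v p + (v q - v p) / n ≤ step n v p := by
  rw [step_of_lt hpn]
  refine add_div_le_expect v (sub_nonneg.2 hpq) card_window_le
    (fun j hj => hp.le_of_mem_window hj) (x := q) ?_ (by linarith)
  rw [mem_window, abs_le]
  exact ⟨hqn, by linarith, hq⟩

/-- The window of `q` strictly contains that of `p`, so it has an agent more than one unit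
above `p`. -/
lemma add_inv_le_step (hp : IsIsolatedBelow n v p) (hpn : p < n) (hqn : q < n)
    (hpq : v p ≤ v q) (hq : v q - v p ≤ 1) (hne : step n v p ≠ step n v q) :
    v p + 1 / n ≤ step n v q := by
  have hge : ∀ j ∈ window n v q, v p ≤ v j := by
    intro j hj
    rw [mem_window, abs_le] at hj
    exact hp j hj.1 (by linarith)
  have hsub : window n v p ⊆ window n v q := by
    intro j hj
    have := hp.le_of_mem_window hj
    rw [mem_window, abs_le] at hj ⊢
    exact ⟨hj.1, by linarith, by linarith⟩
  have hne' : window n v p ≠ window n v q := by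
    intro h
    rw [step_of_lt hpn, step_of_lt hqn, h] at hne
    exact hne rfl
  obtain ⟨j, hjq, hjp⟩ := Finset.exists_of_ssubset (hsub.ssubset_of_ne hne')
  have hfar : v p + 1 < v j := by
    have := hge j hjq
    by_contra! h
    exact hjp (mem_window.2 ⟨(mem_window.1 hjq).1, abs_le.2 ⟨by linarith, by linarith⟩⟩)
  rw [step_of_lt hqn]
  exact add_div_le_expect v zero_le_one card_window_le hge hjq hfar.le

end IsIsolatedBelow

lemma isIsolatedBelow_step (hp : IsIsolatedBelow n v p) (hpn : p < n) :
    IsIsolatedBelow n (step n v) p := by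
  intro j hj hle
  by_contra! hlt
  have hjp : v j < v p := by
    by_contra! h
    exact (step_le_step hpn hj h).not_gt hlt
  have hjp' : v j < v p - 1 := by
    by_contra! h
    exact hjp.not_ge (hp j hj h)
  have hwindow : ∀ k ∈ window n v j, v k < v p - 1 := by
    intro k hk
    rw [mem_window, abs_le] at hk
    by_contra! h
    linarith [hp k hk.1 h]
  have : step n v j < v p - 1 := by
    rw [step_of_lt hj]
    exact Finset.expect_lt (fun k hk => (hwindow k hk).le)
      ⟨j, self_mem_window hj, hwindow j (self_mem_window hj)⟩
  linarith [hp.le_step hpn]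

lemma step_eq_self_of_forall_isIsolatedBelow (h : ∀ i < n, IsIsolatedBelow n v i) :
    step n v = v := by
  funext i
  by_cases hi : i < n
  · have hconst : ∀ j ∈ window n v i, v j = v i := by
      intro j hj
      have hij := (h i hi).le_of_mem_window hj
      have hji : i ∈ window n v j := by
        rw [mem_window] at hj ⊢
        exact ⟨hi, by rw [abs_sub_comm]; exact hj.2⟩
      exact le_antisymm ((h j (mem_window.1 hj).1).le_of_mem_window hji) hij
    rw [step_of_lt hi, Finset.expect_congr rfl hconst,
      Finset.expect_const ⟨i, self_mem_window hi⟩]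
  · simp [step, hi]

noncomputable def settled (n : ℕ) (v : ℕ → ℝ) : Finset ℕ :=
  (Finset.range (n - 1)).filter fun i => v (i + 1) = v i ∨ 1 < v (i + 1) - v i

lemma mem_settled : i ∈ settled n v ↔ i + 1 < n ∧ (v (i + 1) = v i ∨ 1 < v (i + 1) - v i) := by
  simp only [settled, Finset.mem_filter, Finset.mem_range, Nat.lt_sub_iff_add_lt]

section Sorted

variable (hv : MonotoneOn v (Iio n))
include hv

lemma step_le_of_one_lt_sub (hi : i + 1 < n) (hgap : 1 < v (i + 1) - v i) :
    step n v i ≤ v i := by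
  rw [step_of_lt (by omega)]
  refine Finset.expect_le ⟨i, self_mem_window (by omega)⟩ fun j hj => ?_
  rw [mem_window, abs_le] at hj
  rcases le_or_gt j i with hji | hij
  · exact hv hj.1 (by omega : i < n) hji
  · linarith [hv hi hj.1 hij]

lemma le_step_of_one_lt_sub (hi : i + 1 < n) (hgap : 1 < v (i + 1) - v i) :
    v (i + 1) ≤ step n v (i + 1) := by
  rw [step_of_lt hi]
  refine Finset.le_expect ⟨i + 1, self_mem_window hi⟩ fun j hj => ?_
  rw [mem_window, abs_le] at hj
  rcases le_or_gt j i with hji | hij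
  · linarith [hv hj.1 (by omega : i < n) hji]
  · exact hv hi hj.1 hij

lemma settled_subset_settled_step : settled n v ⊆ settled n (step n v) := by
  intro i hi
  obtain ⟨hin, heq | hgap⟩ := mem_settled.1 hi
  · exact mem_settled.2 ⟨hin, .inl (step_eq_step hin (by omega) heq)⟩
  · refine mem_settled.2 ⟨hin, .inr ?_⟩
    linarith [step_le_of_one_lt_sub hv hin hgap, le_step_of_one_lt_sub hv hin hgap]

lemma eq_of_forall_mem_settled (hij : i ≤ j) (hj : j < n)
    (h : ∀ k, i ≤ k → k < j → k ∈ settled n v) (hle : v j - v i ≤ 1) : v j = v i := by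
  induction j, hij using Nat.le_induction with
  | base => rfl
  | succ j hij ih =>
    have hvij : v i ≤ v j := hv (by omega : i < n) (by omega : j < n) hij
    rcases (mem_settled.1 (h j hij (by omega))).2 with heq | hgap
    · rw [heq]
      exact ih (by omega) (fun k hik hkj => h k hik (by omega)) (by linarith)
    · linarith

lemma isIsolatedBelow_of_forall_lt_mem_settled (hp : p < n) (h : ∀ k < p, k ∈ settled n v) :
    IsIsolatedBelow n v p := by
  intro j hj hle
  rcases le_total p j with hpj | hjp
  · exact hv hp hj hpj
  · exact (eq_of_forall_mem_settled hv hjp hp (fun k _ hk => h k hk) (by linarith)).le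

end Sorted

lemma monotoneOn_iterate_step (hv : MonotoneOn v (Iio n)) (t : ℕ) :
    MonotoneOn ((step n)^[t] v) (Iio n) := by
  induction t with
  | zero => exact hv
  | succ t ih => rw [Function.iterate_succ_apply']; exact monotoneOn_step ih

lemma iterate_step_le {M : ℝ} (h : ∀ j < n, v j ≤ M) (t : ℕ) :
    ∀ j < n, (step n)^[t] v j ≤ M := by
  induction t with
  | zero => exact h
  | succ t ih => rw [Function.iterate_succ_apply']; exact fun j hj => step_le_of_forall_le ih hj

lemma isIsolatedBelow_iterate_step (hp : IsIsolatedBelow n v p) (hpn : p < n) (t : ℕ) :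
    IsIsolatedBelow n ((step n)^[t] v) p := by
  induction t with
  | zero => exact hp
  | succ t ih => rw [Function.iterate_succ_apply']; exact isIsolatedBelow_step ih hpn

lemma exists_mem_settled_iterate_step (hv : MonotoneOn v (Iio n)) (hp : IsIsolatedBelow n v p)
    (hpn : p + 1 < n) : ∃ t, p ∈ settled n ((step n)^[t] v) := by
  by_contra! hunsettled
  set w : ℕ → ℕ → ℝ := fun t => (step n)^[t] v
  have hw : ∀ t, w (t + 1) = step n (w t) := fun t => Function.iterate_succ_apply' _ _ _
  have hlive : ∀ t, w t p < w t (p + 1) ∧ w t (p + 1) - w t p ≤ 1 := by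
    intro t
    have hne_le := hunsettled t
    simp only [mem_settled, not_and, not_or, not_lt] at hne_le
    obtain ⟨hne, hle⟩ := hne_le hpn
    exact ⟨(monotoneOn_iterate_step hv t (by omega : p < n) hpn (by omega)).lt_of_ne' hne, hle⟩
  have hiso : ∀ t, IsIsolatedBelow n (w t) p := isIsolatedBelow_iterate_step hp (by omega)
  have hbdd : ∀ t, w t p ≤ v (n - 1) := fun t =>
    iterate_step_le (fun j hj => hv hj (by omega : n - 1 < n) (by omega)) t p (by omega)
  refine not_bddAbove_range_of_le_add_div (x := fun t => w t p) (y := fun t => w t (p + 1))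
    (N := n) (by exact_mod_cast (by omega : 1 ≤ n)) (fun t => (hlive t).1.le)
    (fun t => ?_) (fun t => ?_) ⟨v (n - 1), by rintro _ ⟨t, rfl⟩; exact hbdd t⟩
  · rw [hw]
    exact (hiso t).add_div_le_step (by omega) hpn (hlive t).1.le (hlive t).2
  · rw [hw]
    refine (hiso t).add_inv_le_step (by omega) hpn (hlive t).1.le (hlive t).2 ?_
    rw [← hw]
    exact (hlive (t + 1)).1.ne

theorem exists_isFixedPt_iterate_step (hv : MonotoneOn v (Iio n)) :
    ∃ T, IsFixedPt (step n) ((step n)^[T] v) := by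
  obtain ⟨T, hT⟩ := exists_forall_ge_eq_of_monotone
    (S := fun t => settled n ((step n)^[t] v)) (B := Finset.range (n - 1))
    (monotone_nat_of_le_succ fun t => by
      rw [Function.iterate_succ_apply']
      exact settled_subset_settled_step (monotoneOn_iterate_step hv t))
    fun t => Finset.filter_subset _ _
  have hvT := monotoneOn_iterate_step hv T
  have hsettled : ∀ p, p + 1 < n → p ∈ settled n ((step n)^[T] v) := by
    intro p
    induction p using Nat.strong_induction_on with
    | _ p ih =>
      intro hpn
      obtain ⟨t, ht⟩ := exists_mem_settled_iterate_step hvT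
        (isIsolatedBelow_of_forall_lt_mem_settled hvT (by omega) fun k hk => ih k hk (by omega))
        hpn
      rwa [← Function.iterate_add_apply, hT _ (by omega)] at ht
  exact ⟨T, step_eq_self_of_forall_isIsolatedBelow fun i hi =>
    isIsolatedBelow_of_forall_lt_mem_settled hvT hi fun k hk => hsettled k (by omega)⟩

end Agents

section Profile

variable {n j : ℕ} {α : ℝ}

/-- Block `0` is closed so that the blocks tile `[0, 1]` as in `IsDiscreteProfileHK`. -/
def block (n j : ℕ) : Set ℝ :=
  if j = 0 then Icc 0 (1 / n) else Ioc (j / n) ((j + 1) / n)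

noncomputable def blockIndex (n : ℕ) (α : ℝ) : ℕ := ⌈α * n⌉₊ - 1

noncomputable def stepProfile (n : ℕ) (v : ℕ → ℝ) (α : ℝ) : ℝ := v (blockIndex n α)

lemma measurableSet_block : MeasurableSet (block n j) := by
  unfold block; split_ifs <;> measurability

lemma volume_block_ne_top : volume (block n j) ≠ ⊤ := by
  unfold block; split_ifs <;> simp

lemma volume_real_block (hn : 0 < n) : volume.real (block n j) = 1 / n := by
  unfold block
  split_ifs
  · rw [Real.volume_real_Icc_of_le (by positivity), sub_zero]
  · rw [Real.volume_real_Ioc_of_le (by gcongr; linarith)]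
    ring

lemma block_subset_Icc (hn : 0 < n) (hj : j < n) : block n j ⊆ Icc 0 1 := by
  have hn' : (0 : ℝ) < n := by exact_mod_cast hn
  have hj' : (j : ℝ) + 1 ≤ n := by exact_mod_cast hj
  unfold block
  split_ifs
  · exact Icc_subset_Icc le_rfl ((div_le_one hn').2 (by linarith))
  · exact Ioc_subset_Icc_self.trans
      (Icc_subset_Icc (by positivity) ((div_le_one hn').2 hj'))

lemma blockIndex_eq_of_mem_block (hn : 0 < n) (hα : α ∈ block n j) : blockIndex n α = j := by
  have hn' : (0 : ℝ) < n := by exact_mod_cast hn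
  unfold block at hα
  unfold blockIndex
  split_ifs at hα with hj
  · have : α * n ≤ 1 := (le_div_iff₀ hn').1 hα.2
    have : ⌈α * n⌉₊ ≤ 1 := Nat.ceil_le.2 (by simpa using this)
    omega
  · have hceil : ⌈α * n⌉₊ = j + 1 := by
      rw [Nat.ceil_eq_iff (by omega)]
      push_cast
      exact ⟨(div_lt_iff₀ hn').1 hα.1, (le_div_iff₀ hn').1 hα.2⟩
    omega

lemma blockIndex_lt (hn : 0 < n) (hα : α ∈ Icc 0 1) : blockIndex n α < n := by
  have : ⌈α * n⌉₊ ≤ n := Nat.ceil_le.2 (mul_le_of_le_one_left (by positivity) hα.2)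
  unfold blockIndex
  omega

lemma mem_block_blockIndex (hn : 0 < n) (hα : α ∈ Icc 0 1) : α ∈ block n (blockIndex n α) := by
  have hn' : (0 : ℝ) < n := by exact_mod_cast hn
  unfold block blockIndex
  split_ifs with h
  · refine ⟨hα.1, (le_div_iff₀ hn').2 ?_⟩
    have : ⌈α * n⌉₊ ≤ 1 := by omega
    exact_mod_cast (Nat.le_ceil _).trans (by exact_mod_cast this)
  · have h2 : 2 ≤ ⌈α * n⌉₊ := by omega
    have hcast : ((⌈α * n⌉₊ - 1 : ℕ) : ℝ) = ⌈α * n⌉₊ - 1 := by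
      rw [Nat.cast_sub (by omega), Nat.cast_one]
    rw [hcast, sub_add_cancel]
    refine ⟨(div_lt_iff₀ hn').2 ?_, (le_div_iff₀ hn').2 (Nat.le_ceil _)⟩
    have := Nat.ceil_lt_add_one (mul_nonneg hα.1 hn'.le)
    linarith

lemma disjoint_block (hn : 0 < n) {i j : ℕ} (hij : i ≠ j) : Disjoint (block n i) (block n j) :=
  Set.disjoint_left.2 fun _ hi hj =>
    hij ((blockIndex_eq_of_mem_block hn hi).symm.trans (blockIndex_eq_of_mem_block hn hj))

lemma volume_real_biUnion_block (hn : 0 < n) (s : Finset ℕ) :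
    volume.real (⋃ j ∈ s, block n j) = s.card / n := by
  rw [measureReal_biUnion_finset (fun i _ j _ hij => disjoint_block hn hij)
    (fun _ _ => measurableSet_block) fun _ _ => volume_block_ne_top]
  simp [volume_real_block hn, div_eq_mul_inv]

lemma setIntegral_biUnion_block (hn : 0 < n) (v : ℕ → ℝ) (s : Finset ℕ) :
    ∫ α in ⋃ j ∈ s, block n j, stepProfile n v α = (∑ j ∈ s, v j) / n := by
  have hconst : ∀ j, EqOn (stepProfile n v) (fun _ => v j) (block n j) := fun j α hα => by
    simp only [stepProfile, blockIndex_eq_of_mem_block hn hα]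
  rw [integral_biUnion_finset s (fun _ _ => measurableSet_block)
    (fun i _ j _ hij => disjoint_block hn hij)
    fun j _ => (integrableOn_congr_fun (hconst j) measurableSet_block).2
      (integrableOn_const volume_block_ne_top)]
  rw [Finset.sum_div]
  refine Finset.sum_congr rfl fun j _ => ?_
  rw [setIntegral_congr_fun measurableSet_block (hconst j), setIntegral_const,
    volume_real_block hn, smul_eq_mul]
  ring

lemma nbhdHK_eq_biUnion_block (hn : 0 < n) {v : ℕ → ℝ} {g : ℝ → ℝ}
    (hg : EqOn g (stepProfile n v) (Icc 0 1)) (hα : α ∈ Icc 0 1) :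
    nbhdHK g α = ⋃ j ∈ window n v (blockIndex n α), block n j := by
  ext β
  simp only [nbhdHK, mem_ofPred_eq, mem_iUnion, exists_prop, mem_window]
  constructor
  · rintro ⟨hβ, hβα⟩
    rw [hg hβ, hg hα] at hβα
    exact ⟨blockIndex n β, ⟨blockIndex_lt hn hβ, hβα⟩, mem_block_blockIndex hn hβ⟩
  · rintro ⟨j, ⟨hj, hjα⟩, hβ⟩
    have hβI := block_subset_Icc hn hj hβ
    refine ⟨hβI, ?_⟩
    rw [hg hβI, hg hα, stepProfile, stepProfile, blockIndex_eq_of_mem_block hn hβ]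
    exact hjα

lemma updateHK_eqOn_stepProfile_step (hn : 0 < n) {v : ℕ → ℝ} {g : ℝ → ℝ}
    (hg : EqOn g (stepProfile n v) (Icc 0 1)) :
    EqOn (updateHK g) (stepProfile n (step n v)) (Icc 0 1) := by
  intro α hα
  have hi := blockIndex_lt hn hα
  have hW : (0 : ℝ) < (window n v (blockIndex n α)).card := by
    exact_mod_cast (Finset.card_pos.2 ⟨_, self_mem_window hi⟩)
  have hWI : (⋃ j ∈ window n v (blockIndex n α), block n j) ⊆ Icc 0 1 :=
    iUnion₂_subset fun j hj => block_subset_Icc hn (mem_window.1 hj).1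
  have hvol : (volume (nbhdHK g α)).toReal = (window n v (blockIndex n α)).card / n := by
    rw [← measureReal_def, nbhdHK_eq_biUnion_block hn hg hα, volume_real_biUnion_block hn]
  have hint : ∫ β in nbhdHK g α, g β = (∑ j ∈ window n v (blockIndex n α), v j) / n := by
    rw [nbhdHK_eq_biUnion_block hn hg hα, setIntegral_congr_fun
      (Finset.measurableSet_biUnion _ fun _ _ => measurableSet_block) (hg.mono hWI),
      setIntegral_biUnion_block hn]
  rw [updateHK, hvol, if_pos (by positivity), hint, stepProfile, step_of_lt hi,
    Finset.expect_eq_sum_div_card]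
  field_simp

lemma eqOn_stepProfile_of_isDiscreteProfileHK (hn : 0 < n) {f : ℝ → ℝ}
    (hf : IsDiscreteProfileHK n f) :
    EqOn f (stepProfile n fun j => f ((j + 1) / n)) (Icc 0 1) := by
  intro α hα
  have hα' := mem_block_blockIndex hn hα
  have hlt := blockIndex_lt hn hα
  rw [stepProfile]
  generalize blockIndex n α = j at hα' hlt
  unfold block at hα'
  split_ifs at hα' with hj
  · subst hj
    rw [hf.2.1 α hα', Nat.cast_zero, zero_add, hf.2.1 _ ⟨by positivity, le_rfl⟩]
  · have := hf.2.2 (j + 1) (by omega) (by omega) α (by push_cast; simpa using hα')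
    exact_mod_cast this

lemma monotoneOn_of_isDiscreteProfileHK {f : ℝ → ℝ} (hf : IsDiscreteProfileHK n f) :
    MonotoneOn (fun j : ℕ => f ((j + 1) / n)) (Iio n) := by
  have hmem : ∀ j : ℕ, j < n → ((j : ℝ) + 1) / n ∈ Icc (0 : ℝ) 1 := fun j hj =>
    ⟨by positivity, div_le_one_of_le₀ (by exact_mod_cast hj) (Nat.cast_nonneg n)⟩
  intro i hi j hj hij
  exact hf.1 (hmem i hi) (hmem j hj) (by gcongr)

end Profile

end HegselmannKrause

open HegselmannKrause

/-- every discrete profile freezes in finite time: there is `T` with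
`U^{T+t} f = U^T f` for all `t`. -/
theorem stmt5 (n : ℕ) (hn : 1 ≤ n) (f : ℝ → ℝ) (hf : IsDiscreteProfileHK n f) :
    ∃ T : ℕ, ∀ t : ℕ, EqOn (updateHK^[T + t] f) (updateHK^[T] f) (Icc 0 1) := by
  set v : ℕ → ℝ := fun j => f ((j + 1) / n)
  have hiter : ∀ t, EqOn (updateHK^[t] f) (stepProfile n ((step n)^[t] v)) (Icc 0 1) := by
    intro t
    induction t with
    | zero => exact eqOn_stepProfile_of_isDiscreteProfileHK hn hf
    | succ t ih =>
      rw [Function.iterate_succ_apply', Function.iterate_succ_apply']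
      exact updateHK_eqOn_stepProfile_step hn ih
  obtain ⟨T, hT⟩ := exists_isFixedPt_iterate_step (monotoneOn_of_isDiscreteProfileHK hf)
  refine ⟨T, fun t α hα => ?_⟩
  rw [hiter (T + t) hα, hiter T hα, add_comm, Function.iterate_add_apply,
    Function.iterate_fixed hT]
end

section
/- Let f be an (m,M)-regular profile. Define u(α) = 0 if f(α) ≤ f(0) + 1 and u(α) = f⁻¹(f(α) − 1) otherwise; v(α) = 1 if f(α) ≥ f(1) − 1 and v(α) = f⁻¹(f(α) + 1) otherwise; and w(α) = v(α) − u(α), which equals the Lebesgue measure of N_α(f). Then at every α ∈ (0,1) at which both u and v are differentiable, the function Uf is differentiable, and its derivative satisfies (Uf)'(α) = (1/w(α)) · ( u'(α)·(1 + Uf(α) − f(α)) + v'(α)·(1 + f(α) − Uf(α)) ). -/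
open MeasureTheory Set

/-- `f` is `(m,M)`-regular on `S`: `m·|α-β| ≤ |f(α)-f(β)| ≤ M·|α-β|` on `S`. -/
def RegularOnHK (m M : ℝ) (f : ℝ → ℝ) (S : Set ℝ) : Prop :=
  ∀ α ∈ S, ∀ β ∈ S, m * |α - β| ≤ |f α - f β| ∧ |f α - f β| ≤ M * |α - β|

/-- derivative formula for the update of a regular profile. With
`u(α)` and `v(α)` the leftmost and rightmost neighbours of `α` (so that
`w(α) = v(α) - u(α) = λ(N_α(f))`), at every interior point `α` where `u` and `v`
are differentiable, `Uf` is differentiable with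
`(Uf)'(α) = (1/w(α))·(u'(α)·(1 + Uf(α) - f(α)) + v'(α)·(1 + f(α) - Uf(α)))`. -/
theorem stmt6 (m M : ℝ) (hm : 0 < m) (hM : 0 < M) (f : ℝ → ℝ)
    (hmono : MonotoneOn f (Icc 0 1))
    (hreg : RegularOnHK m M f (Icc 0 1))
    (u v : ℝ → ℝ)
    (hu : ∀ γ ∈ Icc (0:ℝ) 1,
      (f γ ≤ f 0 + 1 → u γ = 0) ∧
      (f 0 + 1 < f γ → u γ ∈ Icc (0:ℝ) 1 ∧ f (u γ) = f γ - 1))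
    (hv : ∀ γ ∈ Icc (0:ℝ) 1,
      (f 1 - 1 ≤ f γ → v γ = 1) ∧
      (f γ < f 1 - 1 → v γ ∈ Icc (0:ℝ) 1 ∧ f (v γ) = f γ + 1))
    (α : ℝ) (hα : α ∈ Ioo (0:ℝ) 1)
    (u' v' : ℝ) (hu' : HasDerivAt u u' α) (hv' : HasDerivAt v v' α) :
    (volume (nbhdHK f α)).toReal = v α - u α ∧
    HasDerivAt (updateHK f)
      ((1 / (v α - u α)) *
        (u' * (1 + updateHK f α - f α) + v' * (1 + f α - updateHK f α))) α := by
  have h01 : (0:ℝ) ∈ Icc (0:ℝ) 1 := ⟨le_refl 0, zero_le_one⟩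
  have h11 : (1:ℝ) ∈ Icc (0:ℝ) 1 := ⟨zero_le_one, le_refl 1⟩
  -- strict monotonicity
  have hsm : StrictMonoOn f (Icc 0 1) := by
    intro x hx y hy hxy
    have h1 := hmono hx hy hxy.le
    have h2 := (hreg x hx y hy).1
    rw [abs_of_nonpos (by linarith), abs_of_nonpos (by linarith)] at h2
    nlinarith
  -- Lipschitz continuity on [0,1]
  have hcf : ContinuousOn f (Icc 0 1) := by
    have : LipschitzOnWith M.toNNReal f (Icc 0 1) := by
      intro x hx y hy
      have h2 := (hreg x hx y hy).2
      simp only [edist_dist, Real.dist_eq]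
      rw [← ENNReal.ofReal_coe_nnreal, ← ENNReal.ofReal_mul (by positivity)]
      apply ENNReal.ofReal_le_ofReal
      simpa [Real.coe_toNNReal M hM.le] using h2
    exact this.continuousOn
  set fc : ℝ → ℝ := fun x => f (max 0 (min 1 x)) with hfc_def
  have hmem : ∀ x : ℝ, max 0 (min 1 x) ∈ Icc (0:ℝ) 1 := by
    intro x
    constructor
    · exact le_max_left _ _
    · exact max_le zero_le_one (min_le_left _ _)
  have hfc_cont : Continuous fc := by
    apply hcf.comp_continuous
    · exact continuous_const.max (continuous_const.min continuous_id)
    · exact hmem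
  have hfc_eq : ∀ x ∈ Icc (0:ℝ) 1, fc x = f x := by
    intro x hx
    simp only [hfc_def]
    rw [min_eq_right hx.2, max_eq_right hx.1]
  set F : ℝ → ℝ := fun x => ∫ t in (0:ℝ)..x, fc t with hF_def
  have hF : ∀ x : ℝ, HasDerivAt F (fc x) x := by
    intro x
    exact intervalIntegral.integral_hasDerivAt_right
      (hfc_cont.intervalIntegrable _ _) (hfc_cont.stronglyMeasurableAtFilter _ _)
      hfc_cont.continuousAt
  -- key properties at each γ ∈ Ioo 0 1
  have key : ∀ γ ∈ Ioo (0:ℝ) 1, u γ ∈ Icc (0:ℝ) 1 ∧ v γ ∈ Icc (0:ℝ) 1 ∧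
      u γ < γ ∧ γ < v γ ∧ nbhdHK f γ = Icc (u γ) (v γ) := by
    intro γ hγ
    have hγI : γ ∈ Icc (0:ℝ) 1 := Ioo_subset_Icc_self hγ
    obtain ⟨hu1, hu2⟩ := hu γ hγI
    obtain ⟨hv1, hv2⟩ := hv γ hγI
    have huI : u γ ∈ Icc (0:ℝ) 1 := by
      rcases le_or_gt (f γ) (f 0 + 1) with h | h
      · rw [hu1 h]; exact h01
      · exact (hu2 h).1
    have hvI : v γ ∈ Icc (0:ℝ) 1 := by
      rcases le_or_gt (f 1 - 1) (f γ) with h | h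
      · rw [hv1 h]; exact h11
      · exact (hv2 h).1
    have hult : u γ < γ := by
      rcases le_or_gt (f γ) (f 0 + 1) with h | h
      · rw [hu1 h]; exact hγ.1
      · have := (hu2 h).2
        exact (hsm.lt_iff_lt huI hγI).mp (by linarith)
    have hvgt : γ < v γ := by
      rcases le_or_gt (f 1 - 1) (f γ) with h | h
      · rw [hv1 h]; exact hγ.2
      · have := (hv2 h).2
        exact (hsm.lt_iff_lt hγI hvI).mp (by linarith)
    refine ⟨huI, hvI, hult, hvgt, ?_⟩
    ext β
    simp only [nbhdHK, mem_setOf_eq, mem_Icc]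
    constructor
    · rintro ⟨hβ, habs⟩
      rw [abs_le] at habs
      constructor
      · rcases le_or_gt (f γ) (f 0 + 1) with h | h
        · rw [hu1 h]; exact hβ.1
        · have := (hu2 h).2
          exact (hsm.le_iff_le huI hβ).mp (by linarith)
      · rcases le_or_gt (f 1 - 1) (f γ) with h | h
        · rw [hv1 h]; exact hβ.2
        · have := (hv2 h).2
          exact (hsm.le_iff_le hβ hvI).mp (by linarith)
    · rintro ⟨h1, h2⟩
      have hβI : β ∈ Icc (0:ℝ) 1 := ⟨le_trans huI.1 h1, le_trans h2 hvI.2⟩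
      refine ⟨hβI, abs_le.mpr ⟨?_, ?_⟩⟩
      · rcases le_or_gt (f γ) (f 0 + 1) with h | h
        · have := hmono h01 hβI hβI.1
          linarith
        · have := (hu2 h).2
          have := hmono huI hβI h1
          linarith
      · rcases le_or_gt (f 1 - 1) (f γ) with h | h
        · have := hmono hβI h11 hβI.2
          linarith
        · have := (hv2 h).2
          have := hmono hβI hvI h2
          linarith
  have hmeas : ∀ γ ∈ Ioo (0:ℝ) 1, (volume (nbhdHK f γ)).toReal = v γ - u γ := by
    intro γ hγ
    obtain ⟨_, _, h3, h4, h5⟩ := key γ hγ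
    rw [h5, Real.volume_Icc, ENNReal.toReal_ofReal (by linarith)]
  have hupd : ∀ γ ∈ Ioo (0:ℝ) 1,
      updateHK f γ = (F (v γ) - F (u γ)) / (v γ - u γ) := by
    intro γ hγ
    obtain ⟨huI, hvI, h3, h4, h5⟩ := key γ hγ
    have hw : (0:ℝ) < v γ - u γ := by linarith
    rw [updateHK, if_pos (by rw [hmeas γ hγ]; exact hw), hmeas γ hγ, h5]
    congr 1
    have hsub : Icc (u γ) (v γ) ⊆ Icc (0:ℝ) 1 := Icc_subset_Icc huI.1 hvI.2
    have : ∫ β in Icc (u γ) (v γ), f β = ∫ β in Icc (u γ) (v γ), fc β := by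
      apply setIntegral_congr_fun measurableSet_Icc
      intro x hx
      exact (hfc_eq x (hsub hx)).symm
    rw [this, MeasureTheory.integral_Icc_eq_integral_Ioc,
      ← intervalIntegral.integral_of_le (by linarith : u γ ≤ v γ)]
    rw [hF_def]
    rw [← intervalIntegral.integral_interval_sub_left
      (hfc_cont.intervalIntegrable _ _) (hfc_cont.intervalIntegrable _ _)]
  have hαI : α ∈ Icc (0:ℝ) 1 := Ioo_subset_Icc_self hα
  obtain ⟨huIα, hvIα, h3α, h4α, h5α⟩ := key α hα
  have hw : (0:ℝ) < v α - u α := by linarith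
  refine ⟨hmeas α hα, ?_⟩
  -- derivative of g
  have hFu : HasDerivAt (fun γ => F (u γ)) (fc (u α) * u') α := (hF (u α)).comp α hu'
  have hFv : HasDerivAt (fun γ => F (v γ)) (fc (v α) * v') α := (hF (v α)).comp α hv'
  have hnum : HasDerivAt (fun γ => F (v γ) - F (u γ)) (fc (v α) * v' - fc (u α) * u') α :=
    hFv.sub hFu
  have hden : HasDerivAt (fun γ => v γ - u γ) (v' - u') α := hv'.sub hu'
  have hg : HasDerivAt (fun γ => (F (v γ) - F (u γ)) / (v γ - u γ))
      (((fc (v α) * v' - fc (u α) * u') * (v α - u α)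
        - (F (v α) - F (u α)) * (v' - u')) / (v α - u α)^2) α :=
    hnum.div hden (by linarith)
  have hev : updateHK f =ᶠ[nhds α] (fun γ => (F (v γ) - F (u γ)) / (v γ - u γ)) := by
    filter_upwards [Ioo_mem_nhds hα.1 hα.2] with γ hγ using hupd γ hγ
  have hcfα : ContinuousAt f α := by
    have : Icc (0:ℝ) 1 ∈ nhds α :=
      Filter.mem_of_superset (Ioo_mem_nhds hα.1 hα.2) Ioo_subset_Icc_self
    exact hcf.continuousAt this
  -- claims
  have claimU : u' * fc (u α) = u' * (f α - 1) := by
    rw [hfc_eq _ huIα]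
    rcases lt_trichotomy (f α) (f 0 + 1) with h | h | h
    · -- u' = 0
      have huα0 : u α = 0 := (hu α hαI).1 h.le
      have hev0 : u =ᶠ[nhds α] (fun _ => (0:ℝ)) := by
        have h1 : ∀ᶠ γ in nhds α, f γ < f 0 + 1 := hcfα.eventually_lt_const h
        filter_upwards [h1, Ioo_mem_nhds hα.1 hα.2] with γ hγ1 hγ2
        exact (hu γ (Ioo_subset_Icc_self hγ2)).1 hγ1.le
      have : HasDerivAt (fun _ : ℝ => (0:ℝ)) u' α := hu'.congr_of_eventuallyEq hev0.symm
      have hu0 : u' = 0 := this.unique (hasDerivAt_const α 0)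
      rw [hu0]; ring
    · have huα0 : u α = 0 := (hu α hαI).1 h.le
      rw [huα0, h]; ring
    · rw [((hu α hαI).2 h).2]
  have claimV : v' * fc (v α) = v' * (f α + 1) := by
    rw [hfc_eq _ hvIα]
    rcases lt_trichotomy (f α) (f 1 - 1) with h | h | h
    · rw [((hv α hαI).2 h).2]
    · have hvα1 : v α = 1 := (hv α hαI).1 h.ge
      rw [hvα1, h]; ring
    · -- v' = 0
      have hvα1 : v α = 1 := (hv α hαI).1 h.le
      have hev1 : v =ᶠ[nhds α] (fun _ => (1:ℝ)) := by
        have h1 : ∀ᶠ γ in nhds α, f 1 - 1 < f γ := hcfα.eventually_const_lt h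
        filter_upwards [h1, Ioo_mem_nhds hα.1 hα.2] with γ hγ1 hγ2
        exact (hv γ (Ioo_subset_Icc_self hγ2)).1 hγ1.le
      have : HasDerivAt (fun _ : ℝ => (1:ℝ)) v' α := hv'.congr_of_eventuallyEq hev1.symm
      have hv0 : v' = 0 := this.unique (hasDerivAt_const α 1)
      rw [hv0]; ring
  have hA : updateHK f α = (F (v α) - F (u α)) / (v α - u α) := hupd α hα
  have hgoal : (1 / (v α - u α)) *
        (u' * (1 + updateHK f α - f α) + v' * (1 + f α - updateHK f α))
      = ((fc (v α) * v' - fc (u α) * u') * (v α - u α)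
        - (F (v α) - F (u α)) * (v' - u')) / (v α - u α)^2 := by
    rw [hA, mul_comm (fc (v α)) v', mul_comm (fc (u α)) u', claimU, claimV]
    have hwne : v α - u α ≠ 0 := by linarith
    field_simp
    ring
  rw [hgoal]
  exact hg.congr_of_eventuallyEq hev
end

section
/- The update operator U is continuous at every weakly regular profile with respect to the supremum norm: if f is an (m,M)-weakly regular profile, then for every ε > 0 there exists δ > 0 such that every profile g with ‖f − g‖_∞ < δ satisfies ‖Uf − Ug‖_∞ < ε. -/
/-!
Take `δ` small and `|f - g| < δ` on `[0,1]`. Then both `N_α(f)` and `N_α(g)` lie between the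
bands `L = {β | |f β - f α| ≤ 1 - 2δ}` and `U = {β | |f β - f α| ≤ 1 + 2δ}`, and averages of `f`
over sets squeezed between `L` and `U` differ by `O(λ(U \ L) / λ(L))`. Weak regularity controls
both measures uniformly in `α`. The endpoint condition forces the plateau value to be at distance
`< 1` from every value of `f`, so `f` oscillates by at most some `κ < 1` on intervals of a fixed
length `c`, whence `λ(L) ≥ min 1 c`. And `U \ L` misses the plateau, where `f` expands distances
by at least `m`, so `λ(U \ L) ≤ 8δ / m`.
-/

open MeasureTheory Set

/-- `f` is `(m,M)`-weakly regular: there is a closed (possibly empty)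
subinterval `S = [a,b]` of `N₀(f) ∩ N₁(f)` such that `f` is `(m,M)`-regular on
`[0,1] \ S`, `f` is constant on `S`, and, if `D(f) ≤ 2`, neither endpoint of the
interval `N₀(f) ∩ N₁(f)` is an endpoint of `S`. -/
def WeaklyRegularHK (m M : ℝ) (f : ℝ → ℝ) : Prop :=
  ∃ a b : ℝ, Icc a b ⊆ nbhdHK f 0 ∩ nbhdHK f 1 ∧
    RegularOnHK m M f (Icc (0:ℝ) 1 \ Icc a b) ∧
    (∀ x ∈ Icc a b, f x = f a) ∧
    (f 1 - f 0 ≤ 2 → a ≤ b →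
      a ≠ sInf (nbhdHK f 0 ∩ nbhdHK f 1) ∧ a ≠ sSup (nbhdHK f 0 ∩ nbhdHK f 1) ∧
      b ≠ sInf (nbhdHK f 0 ∩ nbhdHK f 1) ∧ b ≠ sSup (nbhdHK f 0 ∩ nbhdHK f 1))

section Average

variable {X : Type*} [MeasurableSpace X] {μ : Measure X} {s : Set X} {h : X → ℝ}

theorem setAverage_sub {g : X → ℝ} (hh : IntegrableOn h s μ) (hg : IntegrableOn g s μ) :
    ⨍ x in s, (h x - g x) ∂μ = ⨍ x in s, h x ∂μ - ⨍ x in s, g x ∂μ := by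
  simp only [setAverage_eq, integral_sub hh hg, smul_sub]

theorem setAverage_sub_const (hs0 : μ s ≠ 0) (hs : μ s ≠ ⊤) (hh : IntegrableOn h s μ) (c : ℝ) :
    ⨍ x in s, h x ∂μ - c = (μ.real s)⁻¹ * ∫ x in s, (h x - c) ∂μ := by
  have hpos : 0 < μ.real s := ENNReal.toReal_pos hs0 hs
  rw [setAverage_eq, integral_sub hh (integrableOn_const hs), setIntegral_const, smul_eq_mul,
    smul_eq_mul, mul_sub, inv_mul_cancel_left₀ hpos.ne']

theorem abs_setAverage_sub_le {c K : ℝ} (hs0 : μ s ≠ 0) (hs : μ s ≠ ⊤)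
    (hh : IntegrableOn h s μ) (hK : ∀ x ∈ s, |h x - c| ≤ K) :
    |⨍ x in s, h x ∂μ - c| ≤ K := by
  have hpos : 0 < μ.real s := ENNReal.toReal_pos hs0 hs
  rw [setAverage_sub_const hs0 hs hh, abs_mul, abs_inv, abs_of_pos hpos, inv_mul_le_iff₀ hpos,
    mul_comm]
  exact norm_setIntegral_le_of_norm_le_const (f := fun x => h x - c) hs.lt_top hK

theorem abs_setAverage_sub_setAverage_le {L A : Set X} {c K : ℝ} (hLA : L ⊆ A)
    (hL : MeasurableSet L) (hL0 : μ L ≠ 0) (hA : μ A ≠ ⊤) (hh : IntegrableOn h A μ)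
    (hK : ∀ x ∈ A, |h x - c| ≤ K) :
    |⨍ x in A, h x ∂μ - ⨍ x in L, h x ∂μ| ≤ 2 * K * μ.real (A \ L) / μ.real A := by
  set a := ⨍ x in L, h x ∂μ
  have hLtop : μ L ≠ ⊤ := measure_ne_top_of_subset hLA hA
  have hA0 : μ A ≠ 0 := fun h0 => hL0 (measure_mono_null hLA h0)
  have ha : |a - c| ≤ K :=
    abs_setAverage_sub_le hL0 hLtop (hh.mono_set hLA) fun x hx => hK x (hLA hx)
  have hsplit : ∫ x in A, (h x - a) ∂μ = ∫ x in A \ L, (h x - a) ∂μ := by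
    have hint : IntegrableOn (fun x => h x - a) A μ := hh.sub (integrableOn_const hA)
    rw [← integral_inter_add_sdiff hL hint, inter_eq_right.2 hLA,
      setAverage_sub_setAverage hLtop, zero_add]
  have hbound : |∫ x in A \ L, (h x - a) ∂μ| ≤ 2 * K * μ.real (A \ L) := by
    refine norm_setIntegral_le_of_norm_le_const (f := fun x => h x - a)
      (measure_ne_top_of_subset sdiff_subset hA).lt_top fun x hx => ?_
    calc ‖h x - a‖ = |(h x - c) - (a - c)| := by rw [Real.norm_eq_abs]; ring_nf
      _ ≤ |h x - c| + |a - c| := abs_sub _ _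
      _ ≤ 2 * K := by linarith [hK x hx.1]
  have hpos : 0 < μ.real A := ENNReal.toReal_pos hA0 hA
  rw [setAverage_sub_const hA0 hA hh, hsplit, abs_mul, abs_inv, abs_of_pos hpos, inv_mul_eq_div]
  exact div_le_div_of_nonneg_right hbound hpos.le

end Average

def bandHK (f : ℝ → ℝ) (α r : ℝ) : Set ℝ :=
  {β | β ∈ Icc (0:ℝ) 1 ∧ |f β - f α| ≤ r}

section Band

variable {f g : ℝ → ℝ} {α r s : ℝ}

theorem bandHK_subset_Icc : bandHK f α r ⊆ Icc 0 1 := fun _ hβ => hβ.1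

theorem volume_bandHK_ne_top : volume (bandHK f α r) ≠ ⊤ :=
  measure_ne_top_of_subset bandHK_subset_Icc (by simp [Real.volume_Icc])

theorem bandHK_mono (hrs : r ≤ s) : bandHK f α r ⊆ bandHK f α s :=
  fun _ hβ => ⟨hβ.1, hβ.2.trans hrs⟩

theorem bandHK_subset_bandHK {δ : ℝ} (hα : α ∈ Icc (0:ℝ) 1)
    (hfg : ∀ β ∈ Icc (0:ℝ) 1, |f β - g β| ≤ δ) (hrs : r + 2 * δ ≤ s) :
    bandHK f α r ⊆ bandHK g α s := by
  rintro β ⟨hβ, hfβ⟩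
  refine ⟨hβ, ?_⟩
  calc |g β - g α| = |(f β - f α) + (g β - f β) + (f α - g α)| := by ring_nf
    _ ≤ |f β - f α| + |g β - f β| + |f α - g α| := abs_add_three _ _ _
    _ ≤ s := by linarith [abs_sub_comm (g β) (f β) ▸ hfg β hβ, hfg α hα]

theorem measurableSet_bandHK (hf : MonotoneOn f (Icc 0 1)) : MeasurableSet (bandHK f α r) := by
  refine OrdConnected.measurableSet ⟨fun x hx y hy z hz => ?_⟩
  have hzI : z ∈ Icc (0:ℝ) 1 := ⟨hx.1.1.trans hz.1, hz.2.trans hy.1.2⟩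
  refine ⟨hzI, abs_le.2 ⟨?_, ?_⟩⟩
  · linarith [(abs_le.1 hx.2).1, hf hx.1 hzI hz.1]
  · linarith [(abs_le.1 hy.2).2, hf hzI hy.1 hz.2]

theorem min_le_volume_real_bandHK {c : ℝ} (hα : α ∈ Icc (0:ℝ) 1)
    (hnear : ∀ β ∈ Icc (0:ℝ) 1, |β - α| ≤ c → |f β - f α| ≤ r) :
    min 1 c ≤ volume.real (bandHK f α r) := by
  have hsub : Icc 0 1 ∩ Icc (α - c) (α + c) ⊆ bandHK f α r := fun β hβ =>
    ⟨hβ.1, hnear β hβ.1 (abs_sub_le_iff.2 ⟨by linarith [hβ.2.2], by linarith [hβ.2.1]⟩)⟩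
  refine le_trans ?_ (measureReal_mono hsub volume_bandHK_ne_top)
  rw [Icc_inter_Icc, Real.volume_real_Icc]
  rcases le_total c 0 with hc | hc
  · exact (min_le_right _ _).trans (hc.trans (le_max_right _ _))
  · refine le_max_of_le_left ?_
    rcases min_cases 1 (α + c) with h₁ | h₁ <;> rcases max_cases 0 (α - c) with h₂ | h₂ <;>
      rcases min_cases 1 c with h₃ | h₃ <;> linarith [hα.1, hα.2]

theorem volume_le_ofReal_div_of_mul_abs_sub_le {P : Set ℝ} {m t : ℝ} (hm : 0 < m)
    (hlow : ∀ x ∈ P, ∀ y ∈ P, m * |x - y| ≤ |f x - f y|) (hval : ∀ x ∈ P, f x ∈ Icc t (t + r)) :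
    volume P ≤ ENNReal.ofReal (r / m) := by
  refine (Real.volume_le_diam P).trans (Metric.ediam_le fun x hx y hy => ?_)
  rw [edist_dist, Real.dist_eq]
  refine ENNReal.ofReal_le_ofReal ((le_div_iff₀ hm).2 ?_)
  have hx' := hval x hx
  have hy' := hval y hy
  calc |x - y| * m = m * |x - y| := mul_comm _ _
    _ ≤ |f x - f y| := hlow x hx y hy
    _ ≤ r := abs_sub_le_iff.2 ⟨by linarith [hx'.2, hy'.1], by linarith [hx'.1, hy'.2]⟩

theorem volume_real_bandHK_sdiff_le {S : Set ℝ} {m ρ : ℝ} (hm : 0 < m) (hρ : 0 ≤ ρ)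
    (hlow : ∀ x ∈ S, ∀ y ∈ S, m * |x - y| ≤ |f x - f y|)
    (hS : ∀ β ∈ Icc (0:ℝ) 1, r - ρ < |f β - f α| → β ∈ S) :
    volume.real (bandHK f α (r + ρ) \ bandHK f α (r - ρ)) ≤ 4 * ρ / m := by
  have hlayer : ∀ t, volume {β ∈ S | f β ∈ Icc t (t + 2 * ρ)} ≤ ENNReal.ofReal (2 * ρ / m) :=
    fun t => volume_le_ofReal_div_of_mul_abs_sub_le hm (fun x hx y hy => hlow x hx.1 y hy.1)
      fun x hx => hx.2
  have hsub : bandHK f α (r + ρ) \ bandHK f α (r - ρ) ⊆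
      {β ∈ S | f β ∈ Icc (f α + (r - ρ)) (f α + (r - ρ) + 2 * ρ)} ∪
        {β ∈ S | f β ∈ Icc (f α - (r + ρ)) (f α - (r + ρ) + 2 * ρ)} := by
    rintro β ⟨⟨hβ, hle⟩, hnot⟩
    have hlt : r - ρ < |f β - f α| := lt_of_not_ge fun h => hnot ⟨hβ, h⟩
    have hβS := hS β hβ hlt
    rcases le_total 0 (f β - f α) with h | h
    · rw [abs_of_nonneg h] at hle hlt
      exact Or.inl ⟨hβS, by constructor <;> linarith⟩
    · rw [abs_of_nonpos h] at hle hlt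
      exact Or.inr ⟨hβS, by constructor <;> linarith⟩
  refine ENNReal.toReal_le_of_le_ofReal (by positivity) ?_
  calc volume (bandHK f α (r + ρ) \ bandHK f α (r - ρ))
      ≤ ENNReal.ofReal (2 * ρ / m) + ENNReal.ofReal (2 * ρ / m) :=
        (measure_mono hsub).trans ((measure_union_le _ _).trans (add_le_add (hlayer _) (hlayer _)))
    _ = ENNReal.ofReal (4 * ρ / m) := by
        rw [← ENNReal.ofReal_add (by positivity) (by positivity)]; ring_nf

end Band

section Update

variable {f g : ℝ → ℝ} {α : ℝ}

theorem updateHK_eq_setAverage (h : 0 < volume.real (nbhdHK f α)) :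
    updateHK f α = ⨍ β in nbhdHK f α, f β := by
  rw [updateHK, if_pos (show 0 < (volume (nbhdHK f α)).toReal from h), setAverage_eq,
    smul_eq_mul, div_eq_inv_mul]
  rfl

theorem abs_updateHK_sub_le {L U : Set ℝ} {δ K : ℝ}
    (hLf : L ⊆ nbhdHK f α) (hLg : L ⊆ nbhdHK g α) (hfU : nbhdHK f α ⊆ U) (hgU : nbhdHK g α ⊆ U)
    (hL : MeasurableSet L) (hL0 : 0 < volume.real L) (hU : volume U ≠ ⊤)
    (hfi : IntegrableOn f U) (hgi : IntegrableOn g U)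
    (hK : ∀ x ∈ U, |f x - f α| ≤ K) (hfg : ∀ x ∈ U, |f x - g x| ≤ δ) :
    |updateHK f α - updateHK g α| ≤ 4 * K * volume.real (U \ L) / volume.real L + δ := by
  have hL0' : volume L ≠ 0 := fun h => hL0.ne' (by simp [Measure.real, h])
  have hK0 : 0 ≤ K := by
    obtain ⟨x, hx⟩ := nonempty_of_measure_ne_zero hL0'
    exact (abs_nonneg _).trans (hK x (hfU (hLf hx)))
  have hcmp : ∀ A, L ⊆ A → A ⊆ U →
      |(⨍ x in A, f x) - ⨍ x in L, f x| ≤ 2 * K * volume.real (U \ L) / volume.real L := by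
    intro A hLA hAU
    have hA : volume A ≠ ⊤ := measure_ne_top_of_subset hAU hU
    refine (abs_setAverage_sub_setAverage_le hLA hL hL0' hA (hfi.mono_set hAU)
      fun x hx => hK x (hAU hx)).trans ?_
    have hdiff : volume.real (A \ L) ≤ volume.real (U \ L) :=
      measureReal_mono (sdiff_subset_sdiff_left hAU) (measure_ne_top_of_subset sdiff_subset hU)
    have hLA' : volume.real L ≤ volume.real A := measureReal_mono hLA hA
    gcongr
  have hposf := hL0.trans_le (measureReal_mono hLf (measure_ne_top_of_subset hfU hU))
  have hposg := hL0.trans_le (measureReal_mono hLg (measure_ne_top_of_subset hgU hU))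
  have hfg' : |(⨍ x in nbhdHK g α, f x) - ⨍ x in nbhdHK g α, g x| ≤ δ := by
    have hB : volume (nbhdHK g α) ≠ ⊤ := measure_ne_top_of_subset hgU hU
    rw [← setAverage_sub (hfi.mono_set hgU) (hgi.mono_set hgU), ← sub_zero (⨍ x in _, _ ∂_)]
    exact abs_setAverage_sub_le (fun h => hposg.ne' (by simp [Measure.real, h])) hB
      ((hfi.sub hgi).mono_set hgU) fun x hx => by simpa using hfg x (hgU hx)
  rw [updateHK_eq_setAverage hposf, updateHK_eq_setAverage hposg]
  calc |(⨍ x in nbhdHK f α, f x) - ⨍ x in nbhdHK g α, g x|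
      ≤ |(⨍ x in nbhdHK f α, f x) - ⨍ x in L, f x| + |(⨍ x in nbhdHK g α, f x) - ⨍ x in L, f x|
        + |(⨍ x in nbhdHK g α, f x) - ⨍ x in nbhdHK g α, g x| := by
        linarith [abs_sub_le (⨍ x in nbhdHK f α, f x) (⨍ x in nbhdHK g α, f x)
            (⨍ x in nbhdHK g α, g x), abs_sub_le (⨍ x in nbhdHK f α, f x) (⨍ x in L, f x)
            (⨍ x in nbhdHK g α, f x), abs_sub_comm (⨍ x in L, f x) (⨍ x in nbhdHK g α, f x)]
    _ ≤ 4 * K * volume.real (U \ L) / volume.real L + δ := by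
        have hdouble : 4 * K * volume.real (U \ L) / volume.real L =
            2 * (2 * K * volume.real (U \ L) / volume.real L) := by ring
        linarith [hcmp _ hLf hfU, hcmp _ hLg hgU]

theorem abs_updateHK_sub_le_mul {S : Set ℝ} {m c κ δ : ℝ}
    (hf : MonotoneOn f (Icc 0 1)) (hg : MonotoneOn g (Icc 0 1)) (hm : 0 < m) (hc : 0 < c)
    (hlow : ∀ x ∈ S, ∀ y ∈ S, m * |x - y| ≤ |f x - f y|) (hα : α ∈ Icc (0:ℝ) 1)
    (hnear : ∀ β ∈ Icc (0:ℝ) 1, |β - α| ≤ c → |f β - f α| ≤ κ)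
    (hfar : ∀ β ∈ Icc (0:ℝ) 1, κ < |f β - f α| → β ∈ S)
    (hδ : 2 * δ ≤ 1 - κ) (hfg : ∀ β ∈ Icc (0:ℝ) 1, |f β - g β| ≤ δ) :
    |updateHK f α - updateHK g α| ≤ (1 + 64 / (m * min 1 c)) * δ := by
  have hδ0 : 0 ≤ δ := (abs_nonneg _).trans (hfg α hα)
  have hκ0 : 0 ≤ κ := by simpa using hnear α hα (by simpa using hc.le)
  have hgf : ∀ β ∈ Icc (0:ℝ) 1, |g β - f β| ≤ δ := fun β hβ => abs_sub_comm (f β) _ ▸ hfg β hβ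
  set L := bandHK f α (1 - 2 * δ)
  set U := bandHK f α (1 + 2 * δ)
  have hμ : 0 < min 1 c := lt_min one_pos hc
  have hL : min 1 c ≤ volume.real L :=
    min_le_volume_real_bandHK hα fun β hβ hβα => (hnear β hβ hβα).trans (by linarith)
  have hUL : volume.real (U \ L) ≤ 4 * (2 * δ) / m :=
    volume_real_bandHK_sdiff_le hm (by positivity) hlow fun β hβ h => hfar β hβ (by linarith)
  have hUI : U ⊆ Icc 0 1 := bandHK_subset_Icc
  have key := abs_updateHK_sub_le (K := 2)
    (bandHK_mono (by linarith)) (bandHK_subset_bandHK hα hfg (by linarith))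
    (bandHK_mono (by linarith)) (bandHK_subset_bandHK hα hgf le_rfl)
    (measurableSet_bandHK hf) (hμ.trans_le hL) volume_bandHK_ne_top
    ((hf.integrableOn_isCompact isCompact_Icc).mono_set hUI)
    ((hg.integrableOn_isCompact isCompact_Icc).mono_set hUI)
    (fun x hx => hx.2.trans (by linarith)) fun x hx => hfg x (hUI hx)
  calc |updateHK f α - updateHK g α| ≤ 4 * 2 * volume.real (U \ L) / volume.real L + δ := key
    _ ≤ 4 * 2 * (4 * (2 * δ) / m) / min 1 c + δ := by gcongr
    _ = (1 + 64 / (m * min 1 c)) * δ := by field_simp; ring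

end Update

section Plateau

variable {f : ℝ → ℝ} {m a b x : ℝ}

theorem strictMonoOn_of_mul_abs_sub_le {s : Set ℝ} (hm : 0 < m) (hf : MonotoneOn f s)
    (hlow : ∀ x ∈ s, ∀ y ∈ s, m * |x - y| ≤ |f x - f y|) : StrictMonoOn f s := by
  intro x hx y hy hxy
  refine (hf hx hy hxy.le).lt_of_ne fun h => ?_
  have := hlow x hx y hy
  rw [h, sub_self, abs_zero] at this
  exact (mul_pos hm (abs_pos.2 (sub_ne_zero.2 hxy.ne))).not_ge this

theorem apply_lt_apply_of_plateau_lt (hm : 0 < m) (hf : MonotoneOn f (Icc 0 1))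
    (hlow : ∀ x ∈ Icc 0 1 \ Icc a b, ∀ y ∈ Icc 0 1 \ Icc a b, m * |x - y| ≤ |f x - f y|)
    (hb : 0 ≤ b) (hx : x ≤ 1) (hbx : b < x) : f b < f x := by
  have hy : (b + x) / 2 ∈ Icc 0 1 \ Icc a b :=
    ⟨⟨by linarith, by linarith⟩, fun h => by linarith [h.2]⟩
  have hx' : x ∈ Icc 0 1 \ Icc a b := ⟨⟨by linarith, hx⟩, fun h => by linarith [h.2]⟩
  calc f b ≤ f ((b + x) / 2) := hf ⟨hb, by linarith⟩ hy.1 (by linarith)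
    _ < f x := strictMonoOn_of_mul_abs_sub_le hm (hf.mono sdiff_subset) hlow hy hx' (by linarith)

theorem apply_lt_apply_of_lt_plateau (hm : 0 < m) (hf : MonotoneOn f (Icc 0 1))
    (hlow : ∀ x ∈ Icc 0 1 \ Icc a b, ∀ y ∈ Icc 0 1 \ Icc a b, m * |x - y| ≤ |f x - f y|)
    (ha : a ≤ 1) (hx : 0 ≤ x) (hxa : x < a) : f x < f a := by
  have hy : (x + a) / 2 ∈ Icc 0 1 \ Icc a b :=
    ⟨⟨by linarith, by linarith⟩, fun h => by linarith [h.1]⟩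
  have hx' : x ∈ Icc 0 1 \ Icc a b := ⟨⟨hx, by linarith⟩, fun h => by linarith [h.1]⟩
  calc f x < f ((x + a) / 2) :=
        strictMonoOn_of_mul_abs_sub_le hm (hf.mono sdiff_subset) hlow hx' hy (by linarith)
    _ ≤ f a := hf hy.1 ⟨by linarith, ha⟩ (by linarith)

/-- Were the plateau value at distance exactly `1` from `f 0` (resp. `f 1`), strict growth of `f`
off the plateau would make `b` the supremum (resp. `a` the infimum) of `N₀(f) ∩ N₁(f)`, against the
endpoint condition. -/
theorem WeaklyRegularHK.exists_plateau_gap {M : ℝ} (hm : 0 < m) (hf : MonotoneOn f (Icc 0 1))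
    (hwr : WeaklyRegularHK m M f) :
    ∃ a b : ℝ, RegularOnHK m M f (Icc 0 1 \ Icc a b) ∧
      ∃ η > 0, ∀ x ∈ Icc a b, ∀ β ∈ Icc (0:ℝ) 1, |f x - f β| ≤ 1 - η := by
  obtain ⟨a, b, hsub, hreg, hconst, hend⟩ := hwr
  refine ⟨a, b, hreg, ?_⟩
  rcases lt_or_ge b a with hba | hab
  · exact ⟨1, one_pos, fun x hx => absurd (hx.1.trans hx.2) hba.not_ge⟩
  have hlow := fun x hx y hy => (hreg x hx y hy).1
  have haT := hsub (left_mem_Icc.2 hab)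
  have hbT := hsub (right_mem_Icc.2 hab)
  have hfb : f b = f a := hconst b (right_mem_Icc.2 hab)
  have ha0 := abs_le.1 haT.1.2
  have ha1 := abs_le.1 haT.2.2
  have hgap0 : f a - f 0 < 1 := by
    refine ha0.2.lt_of_ne fun h => (hend (by linarith) hab).2.2.2 ?_
    refine (IsGreatest.csSup_eq ⟨hbT, fun x hx => not_lt.1 fun hbx => ?_⟩).symm
    have := apply_lt_apply_of_plateau_lt hm hf hlow hbT.1.1.1 hx.1.1.2 hbx
    linarith [(abs_le.1 hx.1.2).2]
  have hgap1 : f 1 - f a < 1 := by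
    refine (by linarith [ha1.1] : f 1 - f a ≤ 1).lt_of_ne fun h => (hend (by linarith) hab).1 ?_
    refine (IsLeast.csInf_eq ⟨haT, fun x hx => not_lt.1 fun hxa => ?_⟩).symm
    have := apply_lt_apply_of_lt_plateau hm hf hlow haT.1.1.2 hx.1.1.1 hxa
    linarith [(abs_le.1 hx.2.2).1]
  refine ⟨min (1 - (f a - f 0)) (1 - (f 1 - f a)), lt_min (by linarith) (by linarith),
    fun x hx β hβ => ?_⟩
  have h0 := hf ⟨le_rfl, zero_le_one⟩ hβ hβ.1
  have h1 := hf hβ ⟨zero_le_one, le_rfl⟩ hβ.2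
  rw [hconst x hx, abs_le]
  constructor <;> linarith [min_le_left (1 - (f a - f 0)) (1 - (f 1 - f a)),
    min_le_right (1 - (f a - f 0)) (1 - (f 1 - f a))]

theorem WeaklyRegularHK.exists_oscillation_lt_one {M : ℝ} (hm : 0 < m) (hM : 0 < M)
    (hf : MonotoneOn f (Icc 0 1)) (hwr : WeaklyRegularHK m M f) :
    ∃ κ < 1, ∃ c > 0, ∃ S : Set ℝ, (∀ x ∈ S, ∀ y ∈ S, m * |x - y| ≤ |f x - f y|) ∧
      (∀ α ∈ Icc (0:ℝ) 1, ∀ β ∈ Icc (0:ℝ) 1, |β - α| ≤ c → |f β - f α| ≤ κ) ∧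
      (∀ α ∈ Icc (0:ℝ) 1, ∀ β ∈ Icc (0:ℝ) 1, κ < |f β - f α| → β ∈ S) := by
  obtain ⟨a, b, hreg, η, hη, hgap⟩ := hwr.exists_plateau_gap hm hf
  refine ⟨max (1 - η) (1 / 2), max_lt (by linarith) (by norm_num), 1 / (2 * M), by positivity,
    Icc 0 1 \ Icc a b, fun x hx y hy => (hreg x hx y hy).1, fun α hα β hβ hβα => ?_,
    fun α hα β hβ h => ⟨hβ, fun hβab => h.not_ge ((hgap β hβab α hα).trans (le_max_left _ _))⟩⟩
  by_cases hαab : α ∈ Icc a b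
  · exact (abs_sub_comm (f α) (f β) ▸ hgap α hαab β hβ).trans (le_max_left _ _)
  by_cases hβab : β ∈ Icc a b
  · exact (hgap β hβab α hα).trans (le_max_left _ _)
  calc |f β - f α| ≤ M * |β - α| := (hreg β ⟨hβ, hβab⟩ α ⟨hα, hαab⟩).2
    _ ≤ M * (1 / (2 * M)) := by gcongr
    _ = 1 / 2 := by field_simp
    _ ≤ max (1 - η) (1 / 2) := le_max_right _ _

end Plateau

/-- `U` is continuous, w.r.t. the sup norm on `[0,1]`, at every
weakly regular profile. -/
theorem stmt7 (m M : ℝ) (hm : 0 < m) (hM : 0 < M) (f : ℝ → ℝ)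
    (hmono : MonotoneOn f (Icc 0 1)) (hwr : WeaklyRegularHK m M f) :
    ∀ ε > 0, ∃ δ > 0, ∀ g : ℝ → ℝ, MonotoneOn g (Icc 0 1) →
      (∀ α ∈ Icc (0:ℝ) 1, |f α - g α| < δ) →
      ∀ α ∈ Icc (0:ℝ) 1, |updateHK f α - updateHK g α| < ε := by
  obtain ⟨κ, hκ, c, hc, S, hlow, hnear, hfar⟩ := hwr.exists_oscillation_lt_one hm hM hmono
  intro ε hε
  set C := 1 + 64 / (m * min 1 c)
  have hC : 0 < C := by positivity
  refine ⟨min ((1 - κ) / 2) (ε / (2 * C)), lt_min (by linarith) (by positivity),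
    fun g hg hfg α hα => ?_⟩
  have hδκ := min_le_left ((1 - κ) / 2) (ε / (2 * C))
  calc |updateHK f α - updateHK g α| ≤ C * min ((1 - κ) / 2) (ε / (2 * C)) :=
        abs_updateHK_sub_le_mul hmono hg hm hc hlow hα (hnear α hα) (hfar α hα) (by linarith)
          fun β hβ => (hfg β hβ).le
    _ ≤ C * (ε / (2 * C)) := by gcongr; exact min_le_right _ _
    _ < ε := by field_simp; linarith
end

section
/- Drift bound for regular profiles: if f is an (m,M)-regular profile with M ≥ 1, then for every α ∈ [0,1] one has Uf(α) − f(α) ≤ 1 − 1/(2M). -/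
open MeasureTheory Set

/-!
Since `f` is monotone and (by the upper regularity bound) continuous, the neighbourhood
`N_α(f)` is a closed interval `[a, b] ∋ α`. On `[a, α]` we have `f ≤ f α`, while on
`[α, b]` we have `f x - f α ≤ min (M (x - α)) 1`. Integrating the latter over an interval
of length `L = b - α ≤ 1` gives at most `M L² / 2 ≤ L / 2` if `L ≤ 1/M`, and `L - 1/(2M)`
otherwise; both are `≤ (1 - 1/(2M)) L ≤ (1 - 1/(2M)) (b - a)`.
-/

theorem RegularOnHK.continuousOn {m M : ℝ} {f : ℝ → ℝ} {S : Set ℝ}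
    (hreg : RegularOnHK m M f S) : ContinuousOn f S :=
  (LipschitzOnWith.of_dist_le' fun x hx y hy => (hreg x hx y hy).2).continuousOn

theorem RegularOnHK.sub_le_mul_sub {m M : ℝ} {f : ℝ → ℝ} {S : Set ℝ}
    (hreg : RegularOnHK m M f S) {x y : ℝ} (hx : x ∈ S) (hy : y ∈ S) (hyx : y ≤ x) :
    f x - f y ≤ M * (x - y) := by
  simpa [abs_of_nonneg (sub_nonneg.2 hyx)] using (le_abs_self _).trans (hreg x hx y hy).2

theorem exists_nbhdHK_eq_Icc {f : ℝ → ℝ} (hmono : MonotoneOn f (Icc 0 1))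
    (hcont : ContinuousOn f (Icc 0 1)) {α : ℝ} (hα : α ∈ Icc (0:ℝ) 1) :
    ∃ a b, 0 ≤ a ∧ a ≤ α ∧ α ≤ b ∧ b ≤ 1 ∧ nbhdHK f α = Icc a b := by
  have hαN : α ∈ nbhdHK f α := ⟨hα, by simp⟩
  have hsub : nbhdHK f α ⊆ Icc 0 1 := fun x hx => hx.1
  have hord : (nbhdHK f α).OrdConnected := by
    refine ⟨fun x hx y hy z hz => ?_⟩
    have hz01 : z ∈ Icc (0:ℝ) 1 := ⟨hx.1.1.trans hz.1, hz.2.trans hy.1.2⟩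
    refine ⟨hz01, abs_le.2 ⟨?_, ?_⟩⟩
    · linarith [(abs_le.1 hx.2).1, hmono hx.1 hz01 hz.1]
    · linarith [(abs_le.1 hy.2).2, hmono hz01 hy.1 hz.2]
  -- `nbhdHK f α` is definitionally `Icc 0 1 ∩ f ⁻¹' closedBall (f α) 1`
  have hclosed : IsClosed (nbhdHK f α) :=
    hcont.preimage_isClosed_of_isClosed isClosed_Icc (Metric.isClosed_closedBall (x := f α))
  obtain ⟨a, b, hN⟩ : ∃ a b, nbhdHK f α = Icc a b :=
    ⟨_, _, eq_Icc_csInf_csSup_of_connected_bdd_closed ⟨⟨α, hαN⟩, hord.isPreconnected⟩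
      (bddBelow_Icc.mono hsub) (bddAbove_Icc.mono hsub) hclosed⟩
  rw [hN] at hαN hsub
  exact ⟨a, b, (hsub (left_mem_Icc.2 (hαN.1.trans hαN.2))).1, hαN.1, hαN.2,
    (hsub (right_mem_Icc.2 (hαN.1.trans hαN.2))).2, hN⟩

theorem integral_mul_sub_left (M α d : ℝ) :
    ∫ x in α..d, M * (x - α) = M * (d - α) ^ 2 / 2 := by
  simp [intervalIntegral.integral_comp_sub_right (fun x => x)]
  ring

theorem integral_le_of_le_mul_sub_of_le_one {g : ℝ → ℝ} {M α d b : ℝ} (hαd : α ≤ d)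
    (hdb : d ≤ b) (hg : IntervalIntegrable g volume α b)
    (hlin : ∀ x ∈ Icc α b, g x ≤ M * (x - α)) (hone : ∀ x ∈ Icc α b, g x ≤ 1) :
    ∫ x in α..b, g x ≤ M * (d - α) ^ 2 / 2 + (b - d) := by
  have hd : d ∈ uIcc α b := mem_uIcc_of_le hαd hdb
  have hgl := hg.mono_set (uIcc_subset_uIcc left_mem_uIcc hd)
  have hgr := hg.mono_set (uIcc_subset_uIcc hd right_mem_uIcc)
  have hleft : ∫ x in α..d, g x ≤ M * (d - α) ^ 2 / 2 := by
    rw [← integral_mul_sub_left]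
    exact intervalIntegral.integral_mono_on hαd hgl
      (Continuous.intervalIntegrable (by fun_prop) _ _)
      fun x hx => hlin x ⟨hx.1, hx.2.trans hdb⟩
  have hright : ∫ x in d..b, g x ≤ b - d := by
    simpa using intervalIntegral.integral_mono_on hdb hgr intervalIntegrable_const
      fun x hx => hone x ⟨hαd.trans hx.1, hx.2⟩
  rw [← intervalIntegral.integral_add_adjacent_intervals hgl hgr]
  linarith

theorem integral_le_of_le_min_mul_sub_one {g : ℝ → ℝ} {M α b : ℝ} (hM : 1 ≤ M)
    (hαb : α ≤ b) (hb : b - α ≤ 1) (hg : IntervalIntegrable g volume α b)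
    (hlin : ∀ x ∈ Icc α b, g x ≤ M * (x - α)) (hone : ∀ x ∈ Icc α b, g x ≤ 1) :
    ∫ x in α..b, g x ≤ (1 - 1 / (2 * M)) * (b - α) := by
  have hM0 : 0 < M := by linarith
  -- split where the linear bound `M (x - α)` reaches `1`
  rcases le_total b (α + 1 / M) with hbM | hMb
  · have hMb : M * (b - α) ≤ 1 := by
      rw [← sub_le_iff_le_add', le_div_iff₀ hM0] at hbM; linarith
    refine (integral_le_of_le_mul_sub_of_le_one hαb le_rfl hg hlin hone).trans ?_
    field_simp
    nlinarith [mul_le_mul_of_nonneg_right hM (sub_nonneg.2 hαb)]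
  · have hαd : α ≤ α + 1 / M := by simp; positivity
    refine (integral_le_of_le_mul_sub_of_le_one hαd hMb hg hlin hone).trans ?_
    field_simp
    nlinarith

theorem intervalAverage_sub_le_drift {f : ℝ → ℝ} {M a α b : ℝ} (hM : 1 ≤ M)
    (hmono : MonotoneOn f (Icc a b)) (haα : a ≤ α) (hαb : α ≤ b) (hab : 0 < b - a)
    (hb : b - α ≤ 1) (hlin : ∀ x ∈ Icc α b, f x - f α ≤ M * (x - α))
    (hone : ∀ x ∈ Icc α b, f x - f α ≤ 1) :
    (∫ x in a..b, f x) / (b - a) - f α ≤ 1 - 1 / (2 * M) := by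
  have hfi : IntervalIntegrable f volume a b :=
    (hmono.mono (uIcc_of_le (haα.trans hαb)).subset).intervalIntegrable
  have hα : α ∈ uIcc a b := mem_uIcc_of_le haα hαb
  have hgi : IntervalIntegrable (fun x => f x - f α) volume a b := hfi.sub intervalIntegrable_const
  have hgl := hgi.mono_set (uIcc_subset_uIcc left_mem_uIcc hα)
  have hgr := hgi.mono_set (uIcc_subset_uIcc hα right_mem_uIcc)
  have hleft : ∫ x in a..α, (f x - f α) ≤ 0 := by
    simpa using intervalIntegral.integral_mono_on haα hgl intervalIntegrable_const
      fun x hx => sub_nonpos.2 (hmono ⟨hx.1, hx.2.trans hαb⟩ ⟨haα, hαb⟩ hx.2)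
  have hright := integral_le_of_le_min_mul_sub_one hM hαb hb hgr hlin hone
  have hsplit := intervalIntegral.integral_add_adjacent_intervals hgl hgr
  rw [intervalIntegral.integral_sub hfi intervalIntegrable_const, intervalIntegral.integral_const,
    smul_eq_mul] at hsplit
  have hc : 0 ≤ 1 - 1 / (2 * M) := by
    rw [sub_nonneg, div_le_one (by positivity)]; linarith
  rw [sub_le_iff_le_add, div_le_iff₀ hab]
  nlinarith [mul_le_mul_of_nonneg_left (by linarith : b - α ≤ b - a) hc]

theorem stmt10_general (m M : ℝ) (hM : 1 ≤ M) (f : ℝ → ℝ)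
    (hmono : MonotoneOn f (Icc 0 1)) (hreg : RegularOnHK m M f (Icc 0 1)) :
    ∀ α ∈ Icc (0:ℝ) 1, updateHK f α - f α ≤ 1 - 1 / (2 * M) := by
  intro α hα
  obtain ⟨a, b, ha, haα, hαb, hb, hN⟩ := exists_nbhdHK_eq_Icc hmono hreg.continuousOn hα
  have hsub : Icc a b ⊆ Icc 0 1 := Icc_subset_Icc ha hb
  rw [updateHK, hN, Real.volume_Icc, ENNReal.toReal_ofReal (by linarith),
    integral_Icc_eq_integral_Ioc, ← intervalIntegral.integral_of_le (haα.trans hαb)]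
  split_ifs with hab
  · refine intervalAverage_sub_le_drift hM (hmono.mono hsub) haα hαb hab (by linarith [hα.1])
      (fun x hx => hreg.sub_le_mul_sub (hsub ⟨haα.trans hx.1, hx.2⟩) hα hx.1)
      fun x hx => (abs_le.1 (hN ▸ ⟨haα.trans hx.1, hx.2⟩ : x ∈ nbhdHK f α).2).2
  · rw [sub_self, sub_nonneg, div_le_one (by positivity)]
    linarith

/-- drift bound for regular profiles: if `f` is an `(m,M)`-regular
profile with `M ≥ 1`, then `Uf(α) - f(α) ≤ 1 - 1/(2M)` for all `α ∈ [0,1]`. -/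
theorem stmt10 (m M : ℝ) (hm : 0 < m) (hM : 1 ≤ M) (f : ℝ → ℝ)
    (hmono : MonotoneOn f (Icc 0 1)) (hreg : RegularOnHK m M f (Icc 0 1)) :
    ∀ α ∈ Icc (0:ℝ) 1, updateHK f α - f α ≤ 1 - 1 / (2 * M) :=
  stmt10_general m M hM f hmono hreg
end
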